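/- arXiv:2102.10281 — 5 statements merged into one kernel-verified Lean document; each statement's English description precedes it below -/
import Mathlib

section
/- Let Z ⊆ X, s, ε > 0, and assume P^s_ε(φ,Z) = ∞. Then for any interval (a,b) ⊂ ℝ with 0 ≤ a < b and any N ∈ ℕ, there exists a finite pairwise disjoint collection {B̄(x_i,t_i,ε,φ)} with x_i ∈ Z, t_i ≥ N, and Σ_i e^{-t_i s} ∈ (a,b). -/
open Set Filter Topology MeasureTheory ENNReal NNReal

variable {X : Type*}

def IsFlow [TopologicalSpace X] (φ : ℝ → X → X) : Prop :=
  Continuous (fun p : X × ℝ => φ p.2 p.1) ∧ (∀ x, φ 0 x = x) ∧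
    ∀ s t : ℝ, ∀ x : X, φ (s + t) x = φ s (φ t x)

def FixedPointFree (φ : ℝ → X → X) : Prop := ∀ x : X, ∃ t : ℝ, φ t x ≠ x

/-- A reparametrization on an interval `I` containing `0`: a continuous injective map
(hence a homeomorphism onto its image) with `α 0 = 0`. -/
def IsRepOn (I : Set ℝ) (α : ℝ → ℝ) : Prop :=
  ContinuousOn α I ∧ Set.InjOn α I ∧ α 0 = 0

def IsRep (t : ℝ) (α : ℝ → ℝ) : Prop := IsRepOn (Set.Icc 0 t) α

/-- Open reparametrization ball `B(x,t,ε,φ)`. -/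
def repBall [MetricSpace X] (φ : ℝ → X → X) (x : X) (t ε : ℝ) : Set X :=
  {y | ∃ α : ℝ → ℝ, IsRep t α ∧ ∀ s ∈ Set.Icc 0 t, dist (φ (α s) x) (φ s y) < ε}

/-- Closed reparametrization ball `B̄(x,t,ε,φ)`. -/
def repBallCl [MetricSpace X] (φ : ℝ → X → X) (x : X) (t ε : ℝ) : Set X :=
  {y | ∃ α : ℝ → ℝ, IsRep t α ∧ ∀ s ∈ Set.Icc 0 t, dist (φ (α s) x) (φ s y) ≤ ε}

/-- A (finite or countable) packing family: pairwise disjoint closed reparametrization balls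
with centers in `Z` and times at least `N`. -/
def IsPackingFamily [MetricSpace X] (φ : ℝ → X → X) (Z : Set X) (ε : ℝ) (N : ℕ)
    (I : Set ℕ) (x : ℕ → X) (t : ℕ → ℝ) : Prop :=
  (∀ i ∈ I, x i ∈ Z ∧ (N : ℝ) ≤ t i) ∧
    ∀ i ∈ I, ∀ j ∈ I, i ≠ j →
      Disjoint (repBallCl φ (x i) (t i) ε) (repBallCl φ (x j) (t j) ε)

/-- `P^s_{N,ε}(φ,Z)`. -/
noncomputable def packPre [MetricSpace X] (φ : ℝ → X → X) (Z : Set X) (s ε : ℝ) (N : ℕ) :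
    ℝ≥0∞ :=
  ⨆ (x : ℕ → X) (t : ℕ → ℝ) (I : Set ℕ) (_ : IsPackingFamily φ Z ε N I x t),
    ∑' i : I, ENNReal.ofReal (Real.exp (-(s * t i)))

/-- `P^s_ε(φ,Z) = lim_{N→∞} P^s_{N,ε}(φ,Z)` (the limit of a non-increasing sequence). -/
noncomputable def packP [MetricSpace X] (φ : ℝ → X → X) (Z : Set X) (s ε : ℝ) : ℝ≥0∞ :=
  ⨅ N : ℕ, packPre φ Z s ε N

/-- `𝒫^s_ε(Z)`. -/
noncomputable def packM [MetricSpace X] (φ : ℝ → X → X) (Z : Set X) (s ε : ℝ) : ℝ≥0∞ :=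
  ⨅ (Zs : ℕ → Set X) (_ : Z ⊆ ⋃ i, Zs i), ∑' i, packP φ (Zs i) s ε

/-- `h^P_top(φ,Z,ε) = inf{s ≥ 0 : 𝒫^s_ε(Z) = 0}`. -/
noncomputable def packEnt [MetricSpace X] (φ : ℝ → X → X) (Z : Set X) (ε : ℝ) : ℝ≥0∞ :=
  sInf (ENNReal.ofReal '' {s : ℝ | 0 ≤ s ∧ packM φ Z s ε = 0})

/-- `h^P_top(φ,Z) = lim_{ε→0} h^P_top(φ,Z,ε)` (the limit is the supremum by monotonicity). -/
noncomputable def packEntTop [MetricSpace X] (φ : ℝ → X → X) (Z : Set X) : ℝ≥0∞ :=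
  ⨆ (ε : ℝ) (_ : 0 < ε), packEnt φ Z ε

/-- The canonical map `EReal → ℝ≥0∞` (sending negatives to `0` and `⊤` to `⊤`). -/
noncomputable def erealToENNReal (x : EReal) : ℝ≥0∞ :=
  if x = ⊤ then ⊤ else ENNReal.ofReal x.toReal

/-- `limsup_{t→∞} −(1/t) log μ(B(x,t,ε,φ))`, as an extended nonnegative real. -/
noncomputable def upLocalEntAt [MetricSpace X] [MeasurableSpace X] (φ : ℝ → X → X) (μ : Measure X) (x : X)
    (ε : ℝ) : ℝ≥0∞ :=
  erealToENNReal (Filter.limsup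
    (fun t : ℝ => ((t⁻¹ : ℝ) : EReal) * (-(ENNReal.log (μ (repBall φ x t ε)))))
    Filter.atTop)

/-- The upper local entropy `h̄_μ(φ,x)`; the limit as `ε → 0` is the supremum over `ε > 0`
by monotonicity. -/
noncomputable def upLocalEnt [MetricSpace X] [MeasurableSpace X] (φ : ℝ → X → X) (μ : Measure X) (x : X) :
    ℝ≥0∞ :=
  ⨆ (ε : ℝ) (_ : 0 < ε), upLocalEntAt φ μ x ε

/-- The upper local entropy `h̄_μ(φ) = ∫ h̄_μ(φ,x) dμ(x)`. -/
noncomputable def upEnt [MetricSpace X] [MeasurableSpace X] (φ : ℝ → X → X) (μ : Measure X) : ℝ≥0∞ :=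
  ∫⁻ x, upLocalEnt φ μ x ∂μ

/-- `ℳ^s_{N,ε}(φ,Z)` for Bowen entropy. -/
noncomputable def bowenPre [MetricSpace X] (φ : ℝ → X → X) (Z : Set X) (s ε : ℝ) (N : ℕ) :
    ℝ≥0∞ :=
  ⨅ (x : ℕ → X) (t : ℕ → ℝ)
    (_ : (∀ i, (N : ℝ) ≤ t i) ∧ Z ⊆ ⋃ i, repBall φ (x i) (t i) ε),
    ∑' i, ENNReal.ofReal (Real.exp (-(s * t i)))

/-- `ℳ^s_ε(φ,Z) = lim_{N→∞} ℳ^s_{N,ε}(φ,Z)` (a non-decreasing limit). -/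
noncomputable def bowenMeps [MetricSpace X] (φ : ℝ → X → X) (Z : Set X) (s ε : ℝ) : ℝ≥0∞ :=
  ⨆ N : ℕ, bowenPre φ Z s ε N

/-- `ℳ^s(φ,Z) = lim_{ε→0} ℳ^s_ε(φ,Z)` (a non-decreasing limit as `ε` decreases). -/
noncomputable def bowenM [MetricSpace X] (φ : ℝ → X → X) (Z : Set X) (s : ℝ) : ℝ≥0∞ :=
  ⨆ (ε : ℝ) (_ : 0 < ε), bowenMeps φ Z s ε

/-- The Bowen topological entropy `h^B_top(φ,Z)`. -/
noncomputable def bowenEnt [MetricSpace X] (φ : ℝ → X → X) (Z : Set X) : ℝ≥0∞ :=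
  sInf (ENNReal.ofReal '' {s : ℝ | 0 ≤ s ∧ bowenM φ Z s = 0})

/-- if `P^s_ε(φ,Z) = ∞`, then for every interval `(a,b)` with `0 ≤ a < b` and
every `N` there is a finite disjoint collection of closed reparametrization balls centered in
`Z` with times `≥ N` whose weight sum lies in `(a,b)`. -/
theorem packP_infinite_finite_family [MetricSpace X] [CompactSpace X]
    (φ : ℝ → X → X) (hφ : IsFlow φ) (Z : Set X) (s ε : ℝ) (hs : 0 < s) (hε : 0 < ε)
    (hP : packP φ Z s ε = ⊤) (a b : ℝ) (ha : 0 ≤ a) (hab : a < b) (N : ℕ) :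
    ∃ (I : Finset ℕ) (x : ℕ → X) (t : ℕ → ℝ),
      (∀ i ∈ I, x i ∈ Z ∧ (N : ℝ) ≤ t i) ∧
      (∀ i ∈ I, ∀ j ∈ I, i ≠ j →
        Disjoint (repBallCl φ (x i) (t i) ε) (repBallCl φ (x j) (t j) ε)) ∧
      (∑ i ∈ I, Real.exp (-(t i * s))) ∈ Set.Ioo a b := by
  -- choose N' ≥ N with exp(-(s * N')) < b - a
  obtain ⟨M, hM⟩ := exists_nat_gt ((-Real.log (b - a)) / s)
  set N' : ℕ := max N M with hN'
  have hNN' : (N : ℝ) ≤ (N' : ℝ) := by exact_mod_cast le_max_left N M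
  have hMN' : (M : ℝ) ≤ (N' : ℝ) := by exact_mod_cast le_max_right N M
  have hba : 0 < b - a := by linarith
  have hsmall : Real.exp (-(s * (N' : ℝ))) < b - a := by
    rw [← Real.exp_log hba]
    apply Real.exp_lt_exp.mpr
    have : (-Real.log (b - a)) / s < (N' : ℝ) := lt_of_lt_of_le hM hMN'
    have := (div_lt_iff₀ hs).mp this
    nlinarith
  -- packPre at N' is ⊤
  have hPre : packPre φ Z s ε N' = ⊤ := by
    have := (iInf_eq_top.mp hP) N'
    exact this
  have hlt : ENNReal.ofReal a < packPre φ Z s ε N' := by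
    rw [hPre]; exact ENNReal.ofReal_lt_top
  simp only [packPre, lt_iSup_iff] at hlt
  obtain ⟨x, t, I, hfam, hlt⟩ := hlt
  rw [ENNReal.tsum_eq_iSup_sum, lt_iSup_iff] at hlt
  obtain ⟨F', hF'⟩ := hlt
  set F : Finset ℕ := F'.image Subtype.val with hF
  have hsum_eq : ∑ i ∈ F, ENNReal.ofReal (Real.exp (-(s * t i)))
      = ∑ i ∈ F', ENNReal.ofReal (Real.exp (-(s * t (i : ℕ)))) := by
    rw [hF, Finset.sum_image]
    intro p _ q _ h
    exact Subtype.ext h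
  have hFI : ∀ i ∈ F, i ∈ I := by
    intro i hi
    rw [hF, Finset.mem_image] at hi
    obtain ⟨j, _, hj⟩ := hi
    rw [← hj]; exact j.2
  have hsum_real : ∑ i ∈ F, ENNReal.ofReal (Real.exp (-(s * t i)))
      = ENNReal.ofReal (∑ i ∈ F, Real.exp (-(s * t i))) := by
    rw [ENNReal.ofReal_sum_of_nonneg]
    intro i _; exact (Real.exp_pos _).le
  have hS : a < ∑ i ∈ F, Real.exp (-(s * t i)) := by
    have h1 : ENNReal.ofReal a < ENNReal.ofReal (∑ i ∈ F, Real.exp (-(s * t i))) := by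
      rw [← hsum_real, hsum_eq]; exact hF'
    exact (ENNReal.ofReal_lt_ofReal_iff_of_nonneg ha).mp h1
  -- rewrite the summand
  have hswap : ∀ i, Real.exp (-(s * t i)) = Real.exp (-(t i * s)) := by
    intro i; rw [mul_comm]
  -- bound on individual terms for i ∈ F
  have hterm : ∀ i ∈ F, Real.exp (-(t i * s)) < b - a := by
    intro i hi
    have hti : (N' : ℝ) ≤ t i := (hfam.1 i (hFI i hi)).2
    calc Real.exp (-(t i * s)) ≤ Real.exp (-(s * (N' : ℝ))) := by
          apply Real.exp_le_exp.mpr; nlinarith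
      _ < b - a := hsmall
  -- prefix sums
  set f : ℕ → ℝ := fun i => Real.exp (-(t i * s)) with hfdef
  set g : ℕ → ℝ := fun n => ∑ i ∈ F.filter (fun i => i < n), f i with hg
  have hex : ∃ n, a < g n := by
    refine ⟨F.sup id + 1, ?_⟩
    have : F.filter (fun i => i < F.sup id + 1) = F := by
      apply Finset.filter_true_of_mem
      intro i hi
      exact Nat.lt_succ_of_le (Finset.le_sup (f := id) hi)
    show a < ∑ i ∈ F.filter (fun i => i < F.sup id + 1), f i
    rw [this]
    calc a < ∑ i ∈ F, Real.exp (-(s * t i)) := hS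
      _ = ∑ i ∈ F, f i := by
          apply Finset.sum_congr rfl; intro i _; rw [hfdef]; exact hswap i
  classical
  set n : ℕ := Nat.find hex with hn
  have hgn : a < g n := Nat.find_spec hex
  have hn0 : n ≠ 0 := by
    intro h
    have : g 0 = 0 := by
      rw [hg]; simp
    rw [h, this] at hgn; linarith
  obtain ⟨m, hm⟩ : ∃ m, n = m + 1 := ⟨n - 1, (Nat.succ_pred_eq_of_pos (Nat.pos_of_ne_zero hn0)).symm⟩
  have hgm : g m ≤ a := by
    have := Nat.find_min hex (by omega : m < n)
    linarith [not_lt.mp this]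
  have hmF : m ∈ F := by
    by_contra hmF
    have heq : F.filter (fun i => i < m + 1) = F.filter (fun i => i < m) := by
      ext i
      simp only [Finset.mem_filter]
      constructor
      · rintro ⟨hiF, hilt⟩
        refine ⟨hiF, ?_⟩
        rcases Nat.lt_succ_iff_lt_or_eq.mp hilt with h' | h'
        · exact h'
        · exact absurd (h' ▸ hiF) hmF
      · rintro ⟨hiF, hilt⟩
        exact ⟨hiF, by omega⟩
    have : g n = g m := by rw [hg, hm]; simp only [heq]
    rw [this] at hgn; linarith
  have hsplit : g n = f m + g m := by
    have heq : F.filter (fun i => i < m + 1) = insert m (F.filter (fun i => i < m)) := by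
      ext i
      simp only [Finset.mem_insert, Finset.mem_filter]
      constructor
      · rintro ⟨hiF, hilt⟩
        rcases Nat.lt_succ_iff_lt_or_eq.mp hilt with h' | h'
        · exact Or.inr ⟨hiF, h'⟩
        · exact Or.inl h'
      · rintro (h' | ⟨hiF, hilt⟩)
        · rw [h']; exact ⟨hmF, by omega⟩
        · exact ⟨hiF, by omega⟩
    rw [hg, hm]
    simp only [heq]
    rw [Finset.sum_insert (by simp)]
  have hgnb : g n < b := by
    rw [hsplit]
    have hfm : f m < b - a := hterm m hmF
    linarith
  refine ⟨F.filter (fun i => i < n), x, t, ?_, ?_, ?_⟩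
  · intro i hi
    have hiI : i ∈ I := hFI i (Finset.mem_filter.mp hi).1
    exact ⟨(hfam.1 i hiI).1, le_trans hNN' (hfam.1 i hiI).2⟩
  · intro i hi j hj hij
    exact hfam.2 i (hFI i (Finset.mem_filter.mp hi).1) j (hFI j (Finset.mem_filter.mp hj).1) hij
  · exact ⟨hgn, hgnb⟩
end

section
/- Let (X,φ) be a compact metric flow without fixed points. For any η > 0 there exists θ > 0 such that for all x, y ∈ X, any closed interval I containing 0, and any reparametrization α ∈ Rep(I): if d(φ_{α(s)}x, φ_s y) < θ for all s ∈ I, then |α(s) − s| < η|s| for all s ∈ I with |s| > 1, and |α(s) − s| < η for all s ∈ I with |s| ≤ 1. -/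
open Set Filter Topology MeasureTheory ENNReal NNReal

variable {X : Type*}

/-!
By compactness, points cannot have arbitrarily small nonzero periods, so there are `0 < ρ ≤ T`
and `δ > 0` such that every time `t` with `ρ ≤ |t| ≤ T` moves every point by at least `δ`.
If `φ (α s) x` stays `θ`-close to `φ s y`, then over a time step of length at most `T` the
increments of `α s` and of `s` cannot differ by an amount in `[ρ, T]` (the shadowing would
then produce such a displacement of less than `δ`), hence, by the intermediate value theorem,
they differ by less than `ρ`. Chaining about `|s| / T` such steps from `0` gives
`|α s - s| < (|s| / T + 1) * ρ`, and `ρ` is chosen small compared to `η * T`.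
-/

theorem abs_lt_of_continuousOn_uIcc {f : ℝ → ℝ} {a b ρ : ℝ} (hf : ContinuousOn f (uIcc a b))
    (ha : |f a| < ρ) (hne : ∀ r ∈ uIcc a b, |f r| ≠ ρ) : |f b| < ρ := by
  by_contra! hb
  obtain ⟨r, hr, hfr⟩ := intermediate_value_uIcc hf.abs (mem_uIcc_of_le ha.le hb)
  exact hne r hr hfr

section Chaining

variable {f : ℝ → ℝ} {I : Set ℝ} {L ρ : ℝ}

theorem abs_sub_lt_nat_mul_of_forall_abs_sub_lt (hI : Convex ℝ I)
    (hf : ∀ s ∈ I, ∀ s' ∈ I, |s' - s| ≤ L → |f s' - f s| < ρ) {s₀ : ℝ} (hs₀ : s₀ ∈ I) (n : ℕ) :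
    ∀ s ∈ I, |s - s₀| ≤ (n + 1) * L → |f s - f s₀| < (n + 1) * ρ := by
  induction n with
  | zero => simpa using hf s₀ hs₀
  | succ n ih =>
    intro s hs hsL
    push_cast at hsL ⊢
    have hn : (0 : ℝ) < n + 1 + 1 := by positivity
    set c : ℝ := (n + 1) / (n + 1 + 1)
    set s₁ := s₀ + c • (s - s₀)
    have hs₁ : s₁ ∈ I :=
      hI.add_smul_sub_mem hs₀ hs ⟨by positivity, (div_le_one hn).2 (by linarith)⟩
    have hs₁L : |s₁ - s₀| ≤ (n + 1) * L := by
      rw [add_sub_cancel_left, smul_eq_mul, abs_mul, abs_of_nonneg (by positivity)]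
      calc c * |s - s₀| ≤ c * ((n + 1 + 1) * L) := by gcongr
        _ = (n + 1) * L := by simp only [c]; field_simp
    have hss₁L : |s - s₁| ≤ L := by
      have : s - s₁ = (s - s₀) / (n + 1 + 1) := by simp only [s₁, c, smul_eq_mul]; field_simp; ring
      rw [this, abs_div, abs_of_pos hn, div_le_iff₀ hn]
      linarith
    calc |f s - f s₀| = |(f s - f s₁) + (f s₁ - f s₀)| := by ring_nf
      _ ≤ |f s - f s₁| + |f s₁ - f s₀| := abs_add_le _ _
      _ < ρ + (n + 1) * ρ := add_lt_add (hf s₁ hs₁ s hs hss₁L) (ih s₁ hs₁ hs₁L)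
      _ = (n + 1 + 1) * ρ := by ring

theorem abs_sub_lt_of_forall_abs_sub_lt (hI : Convex ℝ I) (hL : 0 < L)
    (hf : ∀ s ∈ I, ∀ s' ∈ I, |s' - s| ≤ L → |f s' - f s| < ρ)
    {s₀ s : ℝ} (hs₀ : s₀ ∈ I) (hs : s ∈ I) : |f s - f s₀| < (|s - s₀| / L + 1) * ρ := by
  have hρ : 0 < ρ := by simpa using hf s₀ hs₀ s₀ hs₀ (by simpa using hL.le)
  set n := ⌊|s - s₀| / L⌋₊
  have hn : |s - s₀| / L < n + 1 := Nat.lt_floor_add_one _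
  calc |f s - f s₀| < (n + 1) * ρ :=
        abs_sub_lt_nat_mul_of_forall_abs_sub_lt hI hf hs₀ n s hs
          (by rw [← div_le_iff₀ hL]; exact hn.le)
    _ ≤ (|s - s₀| / L + 1) * ρ := by
      gcongr
      exact Nat.floor_le (by positivity)

end Chaining

namespace IsFlow

section Topological

variable [TopologicalSpace X] {φ : ℝ → X → X}

theorem tendsto_apply {ι : Type*} (hφ : IsFlow φ) {l : Filter ι} {t : ι → ℝ} {x : ι → X}
    {s : ℝ} {a : X} (ht : Tendsto t l (𝓝 s)) (hx : Tendsto x l (𝓝 a)) :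
    Tendsto (fun n => φ (t n) (x n)) l (𝓝 (φ s a)) :=
  (hφ.1.tendsto (a, s)).comp (hx.prodMk_nhds ht)

def periods (hφ : IsFlow φ) (x : X) : AddSubgroup ℝ where
  carrier := {t | φ t x = x}
  zero_mem' := hφ.2.1 x
  add_mem' {s t} (hs : φ s x = x) (ht : φ t x = x) := show φ (s + t) x = x by
    rw [hφ.2.2, ht, hs]
  neg_mem' {t} (ht : φ t x = x) := show φ (-t) x = x from
    calc φ (-t) x = φ (-t) (φ t x) := by rw [ht]
      _ = x := by rw [← hφ.2.2, neg_add_cancel, hφ.2.1]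

theorem mem_periods (hφ : IsFlow φ) {x : X} {t : ℝ} : t ∈ hφ.periods x ↔ φ t x = x := Iff.rfl

theorem apply_add_of_mem_periods (hφ : IsFlow φ) {x : X} {t : ℝ} (ht : t ∈ hφ.periods x)
    (s : ℝ) : φ (s + t) x = φ s x := by
  rw [hφ.2.2, hφ.mem_periods.1 ht]

theorem apply_eq_apply_mul_fract (hφ : IsFlow φ) {x : X} {t : ℝ} (ht : φ t x = x) (ht0 : t ≠ 0)
    (s : ℝ) : φ s x = φ (t * Int.fract (s / t)) x := by
  have hk : (⌊s / t⌋ : ℤ) • t ∈ hφ.periods x := zsmul_mem (hφ.mem_periods.2 ht) _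
  rw [← hφ.apply_add_of_mem_periods hk (t * Int.fract (s / t))]
  congr 1
  rw [zsmul_eq_mul, Int.fract]
  field_simp
  ring

theorem apply_eq_of_tendsto_periods [T2Space X] (hφ : IsFlow φ) {x : ℕ → X} {t : ℕ → ℝ}
    {a : X} (hx : Tendsto x atTop (𝓝 a)) (ht : Tendsto t atTop (𝓝 0)) (ht0 : ∀ n, t n ≠ 0)
    (hper : ∀ n, φ (t n) (x n) = x n) (s : ℝ) : φ s a = a := by
  have hfract : Tendsto (fun n => t n * Int.fract (s / t n)) atTop (𝓝 0) := by
    refine squeeze_zero_norm (fun n => ?_) (tendsto_zero_iff_norm_tendsto_zero.1 ht)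
    rw [norm_mul, Real.norm_of_nonneg (Int.fract_nonneg _)]
    exact mul_le_of_le_one_right (norm_nonneg _) (Int.fract_lt_one _).le
  have hlim : Tendsto (fun n => φ s (x n)) atTop (𝓝 a) := by
    simp_rw [fun n => hφ.apply_eq_apply_mul_fract (hper n) (ht0 n) s]
    simpa [hφ.2.1] using hφ.tendsto_apply hfract hx
  exact tendsto_nhds_unique (hφ.tendsto_apply tendsto_const_nhds hx) hlim

theorem exists_pos_forall_apply_ne [T2Space X] [FirstCountableTopology X] [CompactSpace X]
    (hφ : IsFlow φ) (hfpf : FixedPointFree φ) :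
    ∃ t₀ > 0, ∀ x : X, ∀ t : ℝ, t ≠ 0 → |t| ≤ t₀ → φ t x ≠ x := by
  by_contra! hcon
  choose x t ht0 htle hper using fun n : ℕ => hcon (1 / (n + 1)) (by positivity)
  obtain ⟨a, k, hk, hka⟩ := CompactSpace.tendsto_subseq x
  obtain ⟨s, hs⟩ := hfpf a
  have ht : Tendsto t atTop (𝓝 0) :=
    squeeze_zero_norm htle tendsto_one_div_add_atTop_nhds_zero_nat
  exact hs (hφ.apply_eq_of_tendsto_periods hka (ht.comp hk.tendsto_atTop) (fun n => ht0 (k n))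
    (fun n => hper (k n)) s)

end Topological

section Metric

variable [MetricSpace X] {φ : ℝ → X → X}

theorem exists_pos_le_dist_apply [CompactSpace X] (hφ : IsFlow φ) {ρ T : ℝ}
    (hper : ∀ x : X, ∀ t : ℝ, ρ ≤ |t| → |t| ≤ T → φ t x ≠ x) :
    ∃ δ > 0, ∀ x : X, ∀ t : ℝ, ρ ≤ |t| → |t| ≤ T → δ ≤ dist (φ t x) x := by
  have hclosed : IsClosed {t : ℝ | ρ ≤ |t| ∧ |t| ≤ T} :=
    (isClosed_le continuous_const continuous_abs).inter (isClosed_le continuous_abs continuous_const)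
  have hK : IsCompact ((univ : Set X) ×ˢ {t : ℝ | ρ ≤ |t| ∧ |t| ≤ T}) :=
    isCompact_univ.prod <| (isCompact_closedBall 0 T).of_isClosed_subset hclosed
      fun t ht => mem_closedBall_zero_iff.2 ht.2
  obtain ⟨δ, hδ, h⟩ := hK.exists_forall_le' (hφ.1.dist continuous_fst).continuousOn
    (a := 0) fun p hp => dist_pos.2 (hper p.1 p.2 hp.2.1 hp.2.2)
  exact ⟨δ, hδ, fun x t h₁ h₂ => h (x, t) ⟨mem_univ x, h₁, h₂⟩⟩

theorem exists_pos_dist_apply_lt [CompactSpace X] (hφ : IsFlow φ) (T : ℝ) {ε : ℝ} (hε : 0 < ε) :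
    ∃ θ > 0, ∀ (z w : X) (s : ℝ), |s| ≤ T → dist z w < θ → dist (φ s z) (φ s w) < ε := by
  have huc : UniformContinuousOn (fun p : X × ℝ => φ p.2 p.1) ((univ : Set X) ×ˢ Icc (-T) T) :=
    (isCompact_univ.prod isCompact_Icc).uniformContinuousOn_of_continuous hφ.1.continuousOn
  obtain ⟨θ, hθ, h⟩ := Metric.uniformContinuousOn_iff.1 huc ε hε
  refine ⟨θ, hθ, fun z w s hs hzw => h (z, s) ⟨mem_univ z, abs_le.1 hs⟩ (w, s)
    ⟨mem_univ w, abs_le.1 hs⟩ ?_⟩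
  rw [Prod.dist_eq, dist_self]
  exact max_lt hzw hθ

theorem abs_sub_lt_of_dist_apply_lt (hφ : IsFlow φ) {T ρ δ θ : ℝ}
    (hδ : ∀ z : X, ∀ t : ℝ, ρ ≤ |t| → |t| ≤ T → δ ≤ dist (φ t z) z)
    (hθ : ∀ (z w : X) (s : ℝ), |s| ≤ T → dist z w < θ → dist (φ s z) (φ s w) < δ / 2)
    {p q : X} {u v : ℝ} (hu : |u| ≤ T) (hvu : |v - u| ≤ T) (hpq : dist p q < θ)
    (h : dist (φ v p) (φ u q) < δ / 2) : |v - u| < ρ := by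
  by_contra! hbig
  have hv : φ v p = φ (v - u) (φ u p) := by rw [← hφ.2.2, sub_add_cancel]
  have hfar := hδ (φ u p) (v - u) hbig hvu
  have hnear := hθ p q u hu hpq
  rw [← hv] at hfar
  linarith [dist_triangle (φ v p) (φ u q) (φ u p), dist_comm (φ u q) (φ u p)]

theorem abs_sub_lt_of_forall_dist_lt (hφ : IsFlow φ) {T ρ δ θ : ℝ}
    (hδ : ∀ z : X, ∀ t : ℝ, ρ ≤ |t| → |t| ≤ T → δ ≤ dist (φ t z) z)
    (hθ : ∀ (z w : X) (s : ℝ), |s| ≤ T → dist z w < θ → dist (φ s z) (φ s w) < δ / 2)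
    (hρ : 0 < ρ) (hρT : ρ ≤ T) {x y : X} {α : ℝ → ℝ} {I : Set ℝ} (hI : I.OrdConnected)
    (hα : ContinuousOn α I) (hclose : ∀ s ∈ I, dist (φ (α s) x) (φ s y) < min θ (δ / 2))
    {s s' : ℝ} (hs : s ∈ I) (hs' : s' ∈ I) (hss' : |s' - s| ≤ T) :
    |(α s' - s') - (α s - s)| < ρ := by
  have hsub : uIcc s s' ⊆ I := hI.uIcc_subset hs hs'
  refine abs_lt_of_continuousOn_uIcc (f := fun r => (α r - r) - (α s - s))
    (((hα.mono hsub).sub continuousOn_id).sub continuousOn_const) (by simpa using hρ) ?_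
  intro r hr hrρ
  have hflow : ∀ (a t : ℝ) (z : X), φ (t - a) (φ a z) = φ t z := by
    intro a t z; rw [← hφ.2.2, sub_add_cancel]
  have hdrift : (α r - α s) - (r - s) = (α r - r) - (α s - s) := by ring
  have key := hφ.abs_sub_lt_of_dist_apply_lt hδ hθ (p := φ (α s) x) (q := φ s y)
    (u := r - s) (v := α r - α s) ((abs_sub_left_of_mem_uIcc hr).trans hss')
    (by rw [hdrift, hrρ]; exact hρT) ((hclose s hs).trans_le (min_le_left _ _))
    (by rw [hflow, hflow]; exact (hclose r (hsub hr)).trans_le (min_le_right _ _))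
  rw [hdrift] at key
  exact key.ne hrρ

end Metric

end IsFlow

/-- the reparametrization-distortion lemma for fixed-point free flows. -/
theorem distortion_lemma [MetricSpace X] [CompactSpace X]
    (φ : ℝ → X → X) (hφ : IsFlow φ) (hfpf : FixedPointFree φ)
    (η : ℝ) (hη : 0 < η) :
    ∃ θ > 0, ∀ (x y : X) (a b : ℝ), a ≤ 0 → 0 ≤ b → ∀ α : ℝ → ℝ,
      IsRepOn (Set.Icc a b) α →
      (∀ s ∈ Set.Icc a b, dist (φ (α s) x) (φ s y) < θ) →
      ∀ s ∈ Set.Icc a b,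
        (1 < |s| → |α s - s| < η * |s|) ∧ (|s| ≤ 1 → |α s - s| < η) := by
  obtain ⟨t₀, ht₀, hper⟩ := hφ.exists_pos_forall_apply_ne hfpf
  set T := min t₀ 1
  set ρ := min η 1 * T / 2
  have hT : 0 < T := lt_min ht₀ one_pos
  have hρ : 0 < ρ := by positivity
  have hρT : ρ ≤ T := by
    have := min_le_right η 1
    simp only [ρ]
    nlinarith
  obtain ⟨δ, hδ, hδdist⟩ := hφ.exists_pos_le_dist_apply (ρ := ρ) (T := T)
    fun x t h₁ h₂ => hper x t (abs_pos.1 (hρ.trans_le h₁)) (h₂.trans (min_le_left _ _))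
  obtain ⟨θ, hθ, hθdist⟩ := hφ.exists_pos_dist_apply_lt T (half_pos hδ)
  refine ⟨min θ (δ / 2), by positivity, fun x y a b ha hb α hα hclose s hs => ?_⟩
  have hgrowth := abs_sub_lt_of_forall_abs_sub_lt (f := fun r => α r - r) (convex_Icc a b) hT
    (fun r hr r' hr' h => hφ.abs_sub_lt_of_forall_dist_lt hδdist hθdist hρ hρT ordConnected_Icc
      hα.1 hclose hr hr' h) ⟨ha, hb⟩ hs
  simp only [hα.2.2, sub_zero] at hgrowth
  have hbound : (|s| / T + 1) * ρ ≤ η * (|s| + 1) / 2 := by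
    rw [show (|s| / T + 1) * ρ = min η 1 * (|s| + T) / 2 by simp only [ρ]; field_simp]
    gcongr
    exacts [min_le_left _ _, min_le_right _ _]
  constructor <;> intro h <;> nlinarith
end

section
/- (5r-lemma for reparametrization balls) Let (X,φ) be a compact metric flow without fixed points, 0 < η < 1, and θ > 0 as given by the reparametrization-distortion lemma. Let ℬ = {B(x,t,ε,φ)}_{(x,t)∈ℐ} be a family of open reparametrization balls with 0 < ε < θ/2 and all t > 1/(1−η)². Then there is a finite or countable subfamily {B(x,t,ε,φ)}_{(x,t)∈ℐ'} of pairwise disjoint balls such that ∪_{B∈ℬ} B ⊆ ∪_{(x,t)∈ℐ'} B(x, (1−η)² t, 5ε, φ). -/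
/-!
Vitali's covering lemma, with `1 / t` playing the role of the radius of `B(x, t, ε, φ)`, selects a
disjoint subfamily such that every ball `B(x_k, t_k, ε)` meets a selected ball `B(x_j, t_j, ε)`
with `(1 - η²) t_j ≤ t_k`; disjoint sets with nonempty interior in a compact metric space are
countably many.

If `y` lies in both balls through reparametrizations `α₁` (along `x_k`) and `α₂` (along `x_j`), and
`z ∈ B(x_k, t_k, ε)` through `β`, then `α₂ ∘ α₁⁻¹ ∘ β` follows the orbit of `z` along that of `x_j`
within `3ε`. It is defined on `[0, (1 - η)² t_j]` because the distortion bounds make `β` map this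
interval into `[0, (1 - η)(1 - η²) t_j] ⊆ α₁([0, (1 - η²) t_j])`, and `α₁⁻¹` is continuous there
since `α₁` is injective on a compact interval.
-/

open Set Filter Topology MeasureTheory ENNReal NNReal

variable {X : Type*}

open Function

section Reparametrization

variable {α β α₁ α₂ : ℝ → ℝ} {I J K : Set ℝ}

lemma IsRepOn.mono (hα : IsRepOn I α) (hJ : J ⊆ I) : IsRepOn J α :=
  ⟨hα.1.mono hJ, hα.2.1.mono hJ, hα.2.2⟩

lemma IsRep.mono {t t' : ℝ} (hα : IsRep t α) (h : t' ≤ t) : IsRep t' α :=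
  IsRepOn.mono hα (Icc_subset_Icc_right h)

lemma isRep_id (t : ℝ) : IsRep t id :=
  ⟨continuousOn_id, injOn_id _, rfl⟩

/-- Inside `f '' K`, the preimage of a closed set `C` under `invFunOn f K` is the compact set
`f '' (C ∩ K)`. -/
theorem IsCompact.continuousOn_invFunOn {A B : Type*} [TopologicalSpace A] [TopologicalSpace B]
    [T2Space B] [Nonempty A] {f : A → B} {K : Set A} (hK : IsCompact K) (hf : ContinuousOn f K)
    (hinj : InjOn f K) : ContinuousOn (invFunOn f K) (f '' K) := by
  refine continuousOn_iff_isClosed.2 fun C hC => ⟨f '' (C ∩ K), ?_, ?_⟩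
  · exact ((hK.inter_left hC).image_of_continuousOn (hf.mono inter_subset_right)).isClosed
  · ext y
    constructor
    · rintro ⟨hyC, x, hxK, rfl⟩
      refine ⟨⟨invFunOn f K (f x), ⟨hyC, invFunOn_mem ⟨x, hxK, rfl⟩⟩, ?_⟩, x, hxK, rfl⟩
      exact invFunOn_eq ⟨x, hxK, rfl⟩
    · rintro ⟨⟨x, ⟨hxC, hxK⟩, rfl⟩, -⟩
      exact ⟨by rwa [mem_preimage, hinj.leftInvOn_invFunOn hxK], x, hxK, rfl⟩

theorem IsRepOn.comp_invFunOn (hα₂ : IsRepOn K α₂) (hα₁ : IsRepOn K α₁) (hK : IsCompact K)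
    (h0 : 0 ∈ K) (hβ : IsRepOn J β) (hmaps : MapsTo β J (α₁ '' K)) :
    IsRepOn J (α₂ ∘ invFunOn α₁ K ∘ β) := by
  have hinv : MapsTo (invFunOn α₁ K) (α₁ '' K) K := (surjOn_image α₁ K).mapsTo_invFunOn
  refine ⟨?_, ?_, ?_⟩
  · exact hα₂.1.comp ((hK.continuousOn_invFunOn hα₁.1 hα₁.2.1).comp hβ.1 hmaps)
      (hinv.comp hmaps)
  · exact hα₂.2.1.comp ((surjOn_image α₁ K).rightInvOn_invFunOn.injOn.comp hβ.2.1 hmaps)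
      (hinv.comp hmaps)
  · have h := hα₁.2.1.leftInvOn_invFunOn h0
    rw [hα₁.2.2] at h
    simp only [comp_apply, hβ.2.2, h, hα₂.2.2]

end Reparametrization

section Distortion

variable [MetricSpace X] {φ : ℝ → X → X}

/-- The conclusion of the distortion lemma on forward intervals `[0, t]`; the two cases
`|s| ≤ 1` and `|s| > 1` merge into the single bound `η * max s 1`. -/
def HasRepDistortion (φ : ℝ → X → X) (θ η : ℝ) : Prop :=
  ∀ (x y : X) (t : ℝ) (α : ℝ → ℝ), IsRep t α → (∀ s ∈ Icc 0 t, dist (φ (α s) x) (φ s y) < θ) →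
    ∀ s ∈ Icc 0 t, |α s - s| < η * max s 1

theorem hasRepDistortion_of_forall_Icc {θ η : ℝ}
    (hdist : ∀ (x y : X) (a b : ℝ), a ≤ 0 → 0 ≤ b → ∀ α : ℝ → ℝ,
      IsRepOn (Icc a b) α →
      (∀ s ∈ Icc a b, dist (φ (α s) x) (φ s y) < θ) →
      ∀ s ∈ Icc a b, (1 < |s| → |α s - s| < η * |s|) ∧ (|s| ≤ 1 → |α s - s| < η)) :
    HasRepDistortion φ θ η := by
  intro x y t α hα hθ s hs
  have h := hdist x y 0 t le_rfl (hs.1.trans hs.2) α hα hθ s hs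
  rw [abs_of_nonneg hs.1] at h
  rcases le_or_gt s 1 with hs1 | hs1
  · simpa [max_eq_right hs1] using h.2 hs1
  · simpa [max_eq_left hs1.le] using h.1 hs1

variable {η t : ℝ} {α : ℝ → ℝ}

lemma lt_one_add_mul_max_of_distortion {s : ℝ} (hs : |α s - s| < η * max s 1) :
    α s < (1 + η) * max s 1 := by
  linarith [(abs_lt.1 hs).2, le_max_left s 1]

lemma one_sub_mul_lt_of_distortion {s : ℝ} (h1 : 1 ≤ s) (hs : |α s - s| < η * max s 1) :
    (1 - η) * s < α s := by
  rw [max_eq_left h1] at hs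
  linarith [(abs_lt.1 hs).1]

theorem IsRep.nonneg_of_distortion (hα : IsRep t α) (hη : η < 1)
    (hD : ∀ s ∈ Icc 0 t, |α s - s| < η * max s 1) (ht : 1 ≤ t) : ∀ s ∈ Icc 0 t, 0 ≤ α s := by
  have ht0 : 0 ≤ t := zero_le_one.trans ht
  have hαt : 0 < α t := by
    have := one_sub_mul_lt_of_distortion ht (hD t ⟨ht0, le_rfl⟩)
    nlinarith
  have hmono : StrictMonoOn α (Icc 0 t) :=
    hα.1.strictMonoOn_of_injOn_Icc ht0 (by rw [hα.2.2]; exact hαt.le) hα.2.1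
  intro s hs
  simpa [hα.2.2] using hmono.monotoneOn ⟨le_rfl, ht0⟩ hs hs.1

theorem IsRep.Icc_subset_image_of_distortion (hα : IsRep t α)
    (hD : ∀ s ∈ Icc 0 t, |α s - s| < η * max s 1) {T : ℝ} (hT : 1 ≤ T) (hTt : T ≤ t) :
    Icc 0 ((1 - η) * T) ⊆ α '' Icc 0 T := by
  have hαT := one_sub_mul_lt_of_distortion hT (hD T ⟨zero_le_one.trans hT, hTt⟩)
  refine Subset.trans ?_ (intermediate_value_Icc (zero_le_one.trans hT)
    (hα.1.mono (Icc_subset_Icc_right hTt)))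
  rw [hα.2.2]
  exact Icc_subset_Icc_right hαT.le

end Distortion

section RepBall

variable [MetricSpace X] {φ : ℝ → X → X} {x : X} {t ε : ℝ}

lemma mem_repBall_self (hε : 0 < ε) : x ∈ repBall φ x t ε :=
  ⟨id, isRep_id t, fun s _ => by simpa using hε⟩

lemma repBall_mono {ε' : ℝ} (h : ε ≤ ε') : repBall φ x t ε ⊆ repBall φ x t ε' :=
  fun _ ⟨α, hα, hd⟩ => ⟨α, hα, fun s hs => (hd s hs).trans_le h⟩

theorem self_mem_interior_repBall (hφ : Continuous fun p : X × ℝ => φ p.2 p.1) (hε : 0 < ε) :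
    x ∈ interior (repBall φ x t ε) := by
  have hnear : ∀ᶠ y in 𝓝 x, ∀ s ∈ Icc 0 t, dist (φ s x) (φ s y) < ε := by
    refine isCompact_Icc.eventually_forall_of_forall_eventually fun s _ => ?_
    have hcont : Continuous fun p : X × ℝ => dist (φ p.2 x) (φ p.2 p.1) :=
      (hφ.comp (continuous_const.prodMk continuous_snd)).dist hφ
    exact (hcont.tendsto (x, s)).eventually_lt_const (by simpa using hε)
  exact mem_interior_iff_mem_nhds.2 (hnear.mono fun y hy => ⟨id, isRep_id t, hy⟩)

theorem repBall_subset_repBall_of_inter_nonempty {θ η ε : ℝ} (hD : HasRepDistortion φ θ η)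
    (hη0 : 0 ≤ η) (hη1 : η < 1) (hεθ : ε ≤ θ) {x₁ x₂ : X} {t₁ t₂ : ℝ}
    (ht₂ : 1 < (1 - η) ^ 2 * t₂) (hcomp : (1 - η ^ 2) * t₂ ≤ t₁)
    (hmeet : (repBall φ x₁ t₁ ε ∩ repBall φ x₂ t₂ ε).Nonempty) :
    repBall φ x₁ t₁ ε ⊆ repBall φ x₂ ((1 - η) ^ 2 * t₂) (3 * ε) := by
  obtain ⟨y, ⟨α₁, hα₁, hd₁⟩, α₂, hα₂, hd₂⟩ := hmeet
  rintro z ⟨β, hβ, hdβ⟩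
  set τ := (1 - η) ^ 2 * t₂
  set T := (1 - η ^ 2) * t₂
  have ht₂0 : 0 ≤ t₂ := (pos_of_mul_pos_right (one_pos.trans ht₂) (sq_nonneg _)).le
  have hτT : τ ≤ T := by nlinarith [mul_nonneg (mul_nonneg hη0 (sub_nonneg.2 hη1.le)) ht₂0]
  have hTt₂ : T ≤ t₂ := by nlinarith [sq_nonneg η]
  have h1T : 1 ≤ T := ht₂.le.trans hτT
  have hτt₁ : τ ≤ t₁ := hτT.trans hcomp
  have D₁ := hD x₁ y t₁ α₁ hα₁ fun s hs => (hd₁ s hs).trans_le hεθ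
  have Dβ := hD x₁ z t₁ β hβ fun s hs => (hdβ s hs).trans_le hεθ
  have hmaps : MapsTo β (Icc 0 τ) (α₁ '' Icc 0 T) := by
    intro s hs
    have hs₁ : s ∈ Icc 0 t₁ := ⟨hs.1, hs.2.trans hτt₁⟩
    refine hα₁.Icc_subset_image_of_distortion D₁ h1T hcomp
      ⟨hβ.nonneg_of_distortion hη1 Dβ (h1T.trans hcomp) s hs₁, ?_⟩
    calc β s ≤ (1 + η) * max s 1 := (lt_one_add_mul_max_of_distortion (Dβ s hs₁)).le
      _ ≤ (1 + η) * τ := by gcongr; exact max_le hs.2 ht₂.le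
      _ = (1 - η) * T := by ring
  refine ⟨_, (hα₂.mono hTt₂).comp_invFunOn (hα₁.mono hcomp) isCompact_Icc ⟨le_rfl, by linarith⟩
    (hβ.mono hτt₁) hmaps, fun s hs => ?_⟩
  set u := invFunOn α₁ (Icc 0 T) (β s)
  have hu : u ∈ Icc 0 T := invFunOn_mem (hmaps hs)
  have hαu : α₁ u = β s := invFunOn_eq (hmaps hs)
  calc dist (φ (α₂ u) x₂) (φ s z)
      ≤ dist (φ (α₂ u) x₂) (φ u y) + dist (φ u y) (φ (α₁ u) x₁) + dist (φ (α₁ u) x₁) (φ s z) :=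
        dist_triangle4 _ _ _ _
    _ < ε + ε + ε := by
        gcongr
        · exact hd₂ u ⟨hu.1, hu.2.trans hTt₂⟩
        · exact dist_comm (φ u y) _ ▸ hd₁ u ⟨hu.1, hu.2.trans hcomp⟩
        · exact hαu ▸ hdβ s ⟨hs.1, hs.2.trans hτt₁⟩
    _ = 3 * ε := by ring

end RepBall

theorem five_r_lemma_general [MetricSpace X] [CompactSpace X]
    (φ : ℝ → X → X) (hφ : IsFlow φ)
    (η θ : ℝ) (hη0 : 0 < η) (hη1 : η < 1)
    (hdist : ∀ (x y : X) (a b : ℝ), a ≤ 0 → 0 ≤ b → ∀ α : ℝ → ℝ,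
      IsRepOn (Set.Icc a b) α →
      (∀ s ∈ Set.Icc a b, dist (φ (α s) x) (φ s y) < θ) →
      ∀ s ∈ Set.Icc a b, (1 < |s| → |α s - s| < η * |s|) ∧ (|s| ≤ 1 → |α s - s| < η))
    (ε : ℝ) (hε0 : 0 < ε) (hεθ : ε < θ / 2)
    {ι : Type*} (c : ι → X × ℝ) (ht : ∀ i, 1 / (1 - η) ^ 2 < (c i).2) :
    ∃ I' : Set ι, I'.Countable ∧
      (∀ i ∈ I', ∀ j ∈ I', i ≠ j →
        Disjoint (repBall φ (c i).1 (c i).2 ε) (repBall φ (c j).1 (c j).2 ε)) ∧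
      (⋃ i, repBall φ (c i).1 (c i).2 ε) ⊆
        ⋃ i ∈ I', repBall φ (c i).1 ((1 - η) ^ 2 * (c i).2) (5 * ε) := by
  have ht' : ∀ i, 1 < (1 - η) ^ 2 * (c i).2 := fun i =>
    (div_lt_iff₀' (pow_pos (sub_pos.2 hη1) 2)).1 (ht i)
  have htpos : ∀ i, 0 < (c i).2 := fun i =>
    pos_of_mul_pos_right (one_pos.trans (ht' i)) (sq_nonneg _)
  have hη2 : 0 < 1 - η ^ 2 := by nlinarith
  obtain ⟨I', -, hdisj, hcover⟩ := Vitali.exists_disjoint_subfamily_covering_enlargement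
    (fun i => repBall φ (c i).1 (c i).2 ε) univ (fun i => ((c i).2)⁻¹) (1 - η ^ 2)⁻¹
    (one_lt_inv₀ hη2 |>.2 (by nlinarith)) (fun i _ => (inv_pos.2 (htpos i)).le) 1
    (fun i _ => inv_le_one_of_one_le₀ (by nlinarith [ht' i]))
    (fun i _ => ⟨_, mem_repBall_self hε0⟩)
  refine ⟨I', hdisj.countable_of_nonempty_interior fun i _ =>
    ⟨_, self_mem_interior_repBall hφ.1 hε0⟩, fun i hi j hj hij => hdisj hi hj hij, ?_⟩
  rintro z ⟨_, ⟨k, rfl⟩, hz⟩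
  obtain ⟨j, hj, hmeet, hjk⟩ := hcover k (mem_univ k)
  rw [← mul_inv, inv_le_inv₀ (htpos k) (mul_pos hη2 (htpos j))] at hjk
  refine mem_iUnion₂.2 ⟨j, hj, repBall_mono (by linarith : 3 * ε ≤ 5 * ε) ?_⟩
  exact repBall_subset_repBall_of_inter_nonempty (hasRepDistortion_of_forall_Icc hdist) hη0.le hη1
    (by linarith) (ht' j) hjk hmeet hz

/-- the `5r`-lemma for reparametrization balls. -/
theorem five_r_lemma [MetricSpace X] [CompactSpace X]
    (φ : ℝ → X → X) (hφ : IsFlow φ) (hfpf : FixedPointFree φ)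
    (η θ : ℝ) (hη0 : 0 < η) (hη1 : η < 1) (hθ : 0 < θ)
    (hdist : ∀ (x y : X) (a b : ℝ), a ≤ 0 → 0 ≤ b → ∀ α : ℝ → ℝ,
      IsRepOn (Set.Icc a b) α →
      (∀ s ∈ Set.Icc a b, dist (φ (α s) x) (φ s y) < θ) →
      ∀ s ∈ Set.Icc a b, (1 < |s| → |α s - s| < η * |s|) ∧ (|s| ≤ 1 → |α s - s| < η))
    (ε : ℝ) (hε0 : 0 < ε) (hεθ : ε < θ / 2)
    {ι : Type*} (c : ι → X × ℝ) (ht : ∀ i, 1 / (1 - η) ^ 2 < (c i).2) :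
    ∃ I' : Set ι, I'.Countable ∧
      (∀ i ∈ I', ∀ j ∈ I', i ≠ j →
        Disjoint (repBall φ (c i).1 (c i).2 ε) (repBall φ (c j).1 (c j).2 ε)) ∧
      (⋃ i, repBall φ (c i).1 (c i).2 ε) ⊆
        ⋃ i ∈ I', repBall φ (c i).1 ((1 - η) ^ 2 * (c i).2) (5 * ε) :=
  five_r_lemma_general φ hφ η θ hη0 hη1 hdist ε hε0 hεθ c ht
end

section
/- Let (X,φ) be a compact metric flow without fixed points and Z ⊆ X a Borel set. Then h^P_top(φ,Z) ≥ sup{ h̄_μ(φ) : μ a Borel probability measure on X with μ(Z) = 1 }. -/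
open Set Filter Topology MeasureTheory ENNReal NNReal

variable {X : Type*}

/-! If `h̄_μ(φ) > s`, a subset `P ⊆ Z` of positive measure consists of points whose
`ε'`-reparametrization balls have measure `< e^{-st}` for arbitrarily large `t`. A Vitali-type
selection among such balls gives a countable disjoint packing whose enlargements cover `P`, so
`μ P` is controlled by packing sums and `𝒫^{(1-θ)s}_ε(Z) > 0`.
The enlargement is where the flow enters: having no fixed points, some `φ τ` moves every point a
definite distance, so a reparametrization shadowing an orbit falls behind by less than `τ` per
time `τ / θ`. Hence if the balls of times `n ≥ m` around `x` and `x'` meet, `x` lies in the ball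
of time `(1 - θ) m - 2τ` and radius `2ε` around `x'`. -/

open Function

section Flow

variable [TopologicalSpace X] {φ : ℝ → X → X}

theorem IsFlow.continuous_uncurry (hφ : IsFlow φ) : Continuous fun p : ℝ × X => φ p.1 p.2 :=
  hφ.1.comp continuous_swap

theorem IsFlow.periodic (hφ : IsFlow φ) {a : ℝ} {w : X} (h : φ a w = w) :
    Periodic (fun t => φ t w) a := fun t => by
  simp only [hφ.2.2, h]

end Flow

theorem ContinuousOn.continuousOn_invFunOn_image {α β : Type*} [TopologicalSpace α] [Nonempty α]
    [TopologicalSpace β] [T2Space β] {f : α → β} {s : Set α} (hs : IsCompact s)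
    (hf : ContinuousOn f s) (hinj : InjOn f s) : ContinuousOn (invFunOn f s) (f '' s) := by
  have : CompactSpace s := isCompact_iff_compactSpace.1 hs
  have hemb : Topology.IsEmbedding (s.domRestrict f) :=
    (hf.domRestrict.isClosedEmbedding (injOn_iff_injective.1 hinj)).isEmbedding
  let g : f '' s → s := fun u => ⟨invFunOn f s u, (surjOn_image f s).mapsTo_invFunOn u.2⟩
  have hg : s.domRestrict f ∘ g = Subtype.val :=
    funext fun u => (surjOn_image f s).rightInvOn_invFunOn u.2
  rw [continuousOn_iff_continuous_domRestrict]
  exact continuous_subtype_val.comp (hemb.continuous_iff.2 (hg ▸ continuous_subtype_val))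

/-- Vitali's selection, with sizes `2⁻¹ ^ k a` so that the enlargement factor `3 / 2` forbids
passing to a higher generation `k`. -/
theorem exists_disjoint_subfamily_inter_nonempty_le {ι α : Type*} (B : ι → Set α) (t : Set ι)
    (k : ι → ℕ) (hne : ∀ a ∈ t, (B a).Nonempty) :
    ∃ u ⊆ t, u.PairwiseDisjoint B ∧ ∀ a ∈ t, ∃ b ∈ u, (B a ∩ B b).Nonempty ∧ k b ≤ k a := by
  obtain ⟨u, hut, hdisj, hcov⟩ := Vitali.exists_disjoint_subfamily_covering_enlargement B t
    (fun a => (2⁻¹ : ℝ) ^ k a) (3 / 2) (by norm_num) (fun a _ => by positivity) 1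
    (fun a _ => pow_le_one₀ (by norm_num) (by norm_num)) hne
  refine ⟨u, hut, hdisj, fun a ha => ?_⟩
  obtain ⟨b, hb, hab, hk⟩ := hcov a ha
  refine ⟨b, hb, hab, ?_⟩
  by_contra! hlt
  have : (2⁻¹ : ℝ) ^ k b ≤ 2⁻¹ * (2⁻¹) ^ k a := by
    rw [← pow_succ']
    exact pow_le_pow_of_le_one (by norm_num) (by norm_num) hlt
  have : 0 < (2⁻¹ : ℝ) ^ k a := by positivity
  linarith

section Metric

variable [MetricSpace X] {φ : ℝ → X → X}

theorem repBallCl_subset_repBall {x : X} {t t' ε ε' : ℝ} (ht : t ≤ t') (hε : ε < ε') :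
    repBallCl φ x t' ε ⊆ repBall φ x t ε' := by
  rintro y ⟨α, ⟨hc, hi, h0⟩, htr⟩
  have hsub : Icc (0 : ℝ) t ⊆ Icc 0 t' := Icc_subset_Icc_right ht
  exact ⟨α, ⟨hc.mono hsub, hi.mono hsub, h0⟩, fun s hs => (htr s (hsub hs)).trans_lt hε⟩

/-- Keeps a reparametrization that `ε`-shadows an orbit from lagging behind by `τ` within
time `U`. -/
def DriftControl (φ : ℝ → X → X) (τ U ε : ℝ) : Prop :=
  ∀ (w y y' : X) (u : ℝ), u ∈ Icc 0 U → dist y y' ≤ ε →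
    dist (φ u y) (φ u y') + ε < dist (φ τ w) w

section Compact

variable [CompactSpace X]

theorem IsFlow.exists_dist_lt (hφ : IsFlow φ) (a b : ℝ) {η : ℝ} (hη : 0 < η) :
    ∃ δ > 0, ∀ u ∈ Icc a b, ∀ v ∈ Icc a b, ∀ x y : X, dist u v < δ → dist x y < δ →
      dist (φ u x) (φ v y) < η := by
  obtain ⟨δ, hδ, h⟩ := Metric.uniformContinuousOn_iff.1
    ((isCompact_Icc.prod isCompact_univ).uniformContinuousOn_of_continuous
      hφ.continuous_uncurry.continuousOn) η hη
  refine ⟨δ, hδ, fun u hu v hv x y huv hxy => ?_⟩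
  exact h (u, x) ⟨hu, mem_univ x⟩ (v, y) ⟨hv, mem_univ y⟩ (by simpa [Prod.dist_eq] using ⟨huv, hxy⟩)

theorem IsFlow.repBallCl_mem_nhds (hφ : IsFlow φ) (x : X) (t : ℝ) {ε : ℝ} (hε : 0 < ε) :
    repBallCl φ x t ε ∈ 𝓝 x := by
  obtain ⟨δ, hδ, h⟩ := hφ.exists_dist_lt 0 t hε
  refine Metric.mem_nhds_iff.2 ⟨δ, hδ, fun y hy => ?_⟩
  exact ⟨id, ⟨continuousOn_id, injOn_id _, rfl⟩,
    fun s hs => (h s hs s hs x y (by simpa using hδ) (Metric.mem_ball'.1 hy)).le⟩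

/-- The displacement `⨆ t, edist (φ t w) w` is lower semicontinuous and positive, hence bounded
below on `X`; a small time `r` displaces every point by less, so `φ r` has no fixed point. -/
theorem IsFlow.exists_forall_apply_ne (hφ : IsFlow φ) (hfpf : FixedPointFree φ) :
    ∃ τ > 0, ∀ w : X, φ τ w ≠ w := by
  by_contra! hper
  have : Nonempty X := ⟨(hper 1 one_pos).choose⟩
  set f : X → ℝ≥0∞ := fun w => ⨆ t, edist (φ t w) w
  have hf : LowerSemicontinuous f := lowerSemicontinuous_iSup fun t =>
    ((hφ.continuous_uncurry.comp (Continuous.prodMk_right t)).edist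
      continuous_id).lowerSemicontinuous
  obtain ⟨w₀, -, hw₀⟩ := (hf.lowerSemicontinuousOn univ).exists_isMinOn univ_nonempty isCompact_univ
  have hpos : 0 < f w₀ := by
    obtain ⟨t, ht⟩ := hfpf w₀
    exact (edist_pos.2 ht).trans_le (le_iSup (fun t => edist (φ t w₀) w₀) t)
  obtain ⟨η, -, hη, hηf⟩ := ENNReal.lt_iff_exists_real_btwn.1 hpos
  obtain ⟨δ, hδ, hmod⟩ := hφ.exists_dist_lt 0 1 (ENNReal.ofReal_pos.1 hη)
  obtain ⟨w, hw⟩ := hper (min δ 1) (lt_min hδ one_pos)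
  have hsmall : f w ≤ ENNReal.ofReal η := iSup_le fun t => by
    obtain ⟨u, hu, hut⟩ := (hφ.periodic hw).exists_mem_Ico₀ (lt_min hδ one_pos) t
    have hu1 : u ∈ Icc (0 : ℝ) 1 := ⟨hu.1, (hu.2.trans_le (min_le_right _ _)).le⟩
    have := hmod u hu1 0 ⟨le_rfl, zero_le_one⟩ w w
      (by simpa [abs_of_nonneg hu.1] using hu.2.trans_le (min_le_left _ _)) (by simpa using hδ)
    rw [hφ.2.1] at this
    exact (edist_lt_ofReal.2 (hut ▸ this)).le
  exact (hsmall.trans_lt hηf).not_ge (hw₀ (mem_univ w))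

theorem IsFlow.exists_driftControl (hφ : IsFlow φ) (hfpf : FixedPointFree φ) :
    ∃ τ > 0, ∀ U ε₀ : ℝ, 0 < ε₀ → ∃ ε > 0, ε ≤ ε₀ ∧ DriftControl φ τ U ε := by
  obtain ⟨τ, hτ, hne⟩ := hφ.exists_forall_apply_ne hfpf
  obtain ⟨δ₁, hδ₁, hmin⟩ := isCompact_univ.exists_forall_le'
    ((hφ.continuous_uncurry.comp (Continuous.prodMk_right τ)).dist continuous_id).continuousOn
    fun w _ => dist_pos.2 (hne w)
  refine ⟨τ, hτ, fun U ε₀ hε₀ => ?_⟩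
  obtain ⟨δ, hδ, hmod⟩ := hφ.exists_dist_lt 0 U (half_pos hδ₁)
  refine ⟨min (δ / 2) (min ε₀ (δ₁ / 2)), by positivity, (min_le_right _ _).trans (min_le_left _ _),
    fun w y y' u hu hyy' => ?_⟩
  calc dist (φ u y) (φ u y') + min (δ / 2) (min ε₀ (δ₁ / 2)) < δ₁ / 2 + δ₁ / 2 := by
        refine add_lt_add_of_lt_of_le (hmod u hu u hu y y' (by simpa using hδ) ?_) ?_
        · exact hyy'.trans_lt ((min_le_left _ _).trans_lt (half_lt_self hδ))
        · exact (min_le_right _ _).trans (min_le_right _ _)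
    _ = δ₁ := add_halves δ₁
    _ ≤ dist (φ τ w) w := hmin w (mem_univ w)

end Compact

end Metric

namespace DriftControl

variable [MetricSpace X] {φ : ℝ → X → X} {τ θ U ε m : ℝ} {x z : X} {α : ℝ → ℝ}

theorem add_sub_lt (hD : DriftControl φ τ U ε) (hφ : IsFlow φ) (hτ : 0 < τ)
    (hα : ContinuousOn α (Icc 0 m)) (htr : ∀ s ∈ Icc 0 m, dist (φ (α s) x) (φ s z) ≤ ε)
    {s u : ℝ} (hs : 0 ≤ s) (hu : u ∈ Icc 0 U) (hsu : s + u ≤ m) :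
    α s + u - τ < α (s + u) := by
  by_contra! hlag
  have hg : ContinuousOn (fun v => α s + v - α (s + v)) (Icc 0 u) :=
    (continuousOn_const.add continuousOn_id).sub (hα.comp (continuousOn_const.add continuousOn_id)
      fun v hv => ⟨by linarith [hv.1], by linarith [hv.2]⟩)
  obtain ⟨v, hv, hτv⟩ := intermediate_value_Icc hu.1 hg ⟨by simpa using hτ.le, by linarith⟩
  have hsv : s + v ∈ Icc 0 m := ⟨by linarith [hv.1], by linarith [hv.2]⟩
  set w := φ (α (s + v)) x
  have hw : φ τ w = φ v (φ (α s) x) := by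
    simp only [w, ← hφ.2.2]
    congr 1
    linarith
  have hdisp : dist (φ τ w) w ≤ dist (φ v (φ (α s) x)) (φ v (φ s z)) + ε := by
    calc dist (φ τ w) w
        ≤ dist (φ v (φ (α s) x)) (φ v (φ s z)) + dist (φ v (φ s z)) w := hw ▸ dist_triangle _ _ _
      _ ≤ dist (φ v (φ (α s) x)) (φ v (φ s z)) + ε := by
        have hz : φ v (φ s z) = φ (s + v) z := by rw [← hφ.2.2, add_comm]
        rw [hz, dist_comm _ w]
        exact add_le_add le_rfl (htr _ hsv)
  exact (hD w _ _ v ⟨hv.1, hv.2.trans hu.2⟩ (htr s ⟨hs, by linarith [hu.1]⟩)).not_ge hdisp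

/-- Each window of length `U` costs a lag of at most `τ`. -/
theorem sub_mul_le (hD : DriftControl φ τ U ε) (hφ : IsFlow φ) (hτ : 0 < τ) (hU : 0 ≤ U)
    (hα : ContinuousOn α (Icc 0 m)) (hα0 : α 0 = 0)
    (htr : ∀ s ∈ Icc 0 m, dist (φ (α s) x) (φ s z) ≤ ε) :
    ∀ (k : ℕ), ∀ σ ∈ Icc 0 m, σ ≤ k * U → σ - (k + 1) * τ ≤ α σ
  | 0, σ, hσ, hσk => by
    obtain rfl : σ = 0 := le_antisymm (by simpa using hσk) hσ.1
    simp [hα0, hτ.le]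
  | k + 1, σ, hσ, hσk => by
    set s := max (σ - U) 0
    have hsσ : s ≤ σ := max_le (by linarith) hσ.1
    have hs : s ∈ Icc 0 m := ⟨le_max_right _ _, hsσ.trans hσ.2⟩
    have hsk : s ≤ k * U := max_le (by push_cast at hσk; linarith) (by positivity)
    have hlag := hD.add_sub_lt hφ hτ hα htr hs.1 (u := σ - s)
      ⟨by linarith, by linarith [le_max_left (σ - U) 0]⟩ (by linarith [hσ.2])
    rw [add_sub_cancel] at hlag
    have := sub_mul_le hD hφ hτ hU hα hα0 htr k s hs hsk
    push_cast
    linarith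

theorem one_sub_mul_sub_le (hD : DriftControl φ τ (τ / θ) ε) (hφ : IsFlow φ) (hτ : 0 < τ)
    (hθ : 0 < θ) (hα : ContinuousOn α (Icc 0 m)) (hα0 : α 0 = 0)
    (htr : ∀ s ∈ Icc 0 m, dist (φ (α s) x) (φ s z) ≤ ε) {σ : ℝ} (hσ : σ ∈ Icc 0 m) :
    (1 - θ) * σ - 2 * τ ≤ α σ := by
  have hU : 0 < τ / θ := div_pos hτ hθ
  set k := ⌈σ / (τ / θ)⌉₊
  have hσk : σ ≤ k * (τ / θ) := (div_le_iff₀ hU).1 (Nat.le_ceil _)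
  have hk : (k : ℝ) * τ < θ * σ + τ := by
    have := Nat.ceil_lt_add_one (div_nonneg hσ.1 hU.le)
    calc (k : ℝ) * τ < (σ / (τ / θ) + 1) * τ := mul_lt_mul_of_pos_right this hτ
      _ = θ * σ + τ := by field_simp
  have := hD.sub_mul_le hφ hτ hU.le hα hα0 htr k σ hσ hσk
  linarith

/-- Two reparametrization balls through a common point: composing the second
reparametrization with the inverse of the first shadows the orbit of `x` from `x'`. -/
theorem mem_repBallCl_of_mem_inter (hD : DriftControl φ τ (τ / θ) ε) (hφ : IsFlow φ)
    (hτ : 0 < τ) (hθ : 0 < θ) {x' : X} {n A : ℝ} (hm : 0 ≤ m) (hmn : m ≤ n)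
    (hA : A ≤ (1 - θ) * m - 2 * τ) (hzx : z ∈ repBallCl φ x n ε)
    (hzx' : z ∈ repBallCl φ x' m ε) : x ∈ repBallCl φ x' A (2 * ε) := by
  obtain ⟨α, ⟨hαc, hαi, hα0⟩, hαtr⟩ := hzx
  obtain ⟨β, ⟨hβc, hβi, hβ0⟩, hβtr⟩ := hzx'
  set K := Icc (0 : ℝ) m
  have hKn : K ⊆ Icc 0 n := Icc_subset_Icc_right hmn
  have h0K : (0 : ℝ) ∈ K := left_mem_Icc.2 hm
  have hαm : A ≤ α m := hA.trans (hD.one_sub_mul_sub_le hφ hτ hθ hαc hα0 hαtr ⟨hm, hmn⟩)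
  have hA_sub : Icc 0 A ⊆ α '' K := fun u hu =>
    intermediate_value_Icc hm (hαc.mono hKn) ⟨by rw [hα0]; exact hu.1, hu.2.trans hαm⟩
  set ψ := invFunOn α K
  have hψK : MapsTo ψ (α '' K) K := (surjOn_image α K).mapsTo_invFunOn
  have hαψ : ∀ u ∈ α '' K, α (ψ u) = u := fun u hu => (surjOn_image α K).rightInvOn_invFunOn hu
  have hψ0 : ψ 0 = 0 := hαi.mono hKn (hψK ⟨0, h0K, hα0⟩) h0K (by rw [hαψ 0 ⟨0, h0K, hα0⟩, hα0])
  refine ⟨β ∘ ψ, ⟨?_, ?_, by simp [hψ0, hβ0]⟩, fun u hu => ?_⟩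
  · exact hβc.comp (((hαc.mono hKn).continuousOn_invFunOn_image isCompact_Icc
      (hαi.mono hKn)).mono hA_sub) (hψK.mono_left hA_sub)
  · exact hβi.comp ((invFunOn_injOn_image α K).mono hA_sub) (hψK.mono_left hA_sub)
  · have hσ := hψK (hA_sub hu)
    calc dist (φ (β (ψ u)) x') (φ u x)
        ≤ dist (φ (β (ψ u)) x') (φ (ψ u) z) + dist (φ (ψ u) z) (φ (α (ψ u)) x) := by
          rw [hαψ u (hA_sub hu)]
          exact dist_triangle _ _ _
      _ ≤ ε + ε := add_le_add (hβtr _ hσ) (dist_comm (φ (ψ u) z) _ ▸ hαtr _ (hKn hσ))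
      _ = 2 * ε := by ring

theorem exists_countable_disjoint_cover [CompactSpace X] (hD : DriftControl φ τ (τ / θ) ε)
    (hφ : IsFlow φ) (hτ : 0 < τ) (hθ : θ ∈ Ioo 0 1) (hε : 0 < ε) (F : Set X) (k : X → ℕ) :
    ∃ C ⊆ F, C.Countable ∧
      C.PairwiseDisjoint (fun x => repBallCl φ x ((k x + 2 * τ) / (1 - θ)) ε) ∧
      F ⊆ ⋃ x ∈ C, repBallCl φ x (k x) (2 * ε) := by
  have hθ' : 0 < 1 - θ := sub_pos.2 hθ.2
  have hnhds x := hφ.repBallCl_mem_nhds x ((k x + 2 * τ) / (1 - θ)) hε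
  obtain ⟨C, hCF, hdisj, hcov⟩ := exists_disjoint_subfamily_inter_nonempty_le
    (fun x => repBallCl φ x ((k x + 2 * τ) / (1 - θ)) ε) F k
    fun x _ => ⟨x, mem_of_mem_nhds (hnhds x)⟩
  refine ⟨C, hCF, hdisj.countable_of_nonempty_interior fun x _ =>
    ⟨x, mem_interior_iff_mem_nhds.2 (hnhds x)⟩, hdisj, fun y hy => ?_⟩
  obtain ⟨x, hx, ⟨z, hzy, hzx⟩, hk⟩ := hcov y hy
  refine mem_biUnion hx (hD.mem_repBallCl_of_mem_inter hφ hτ hθ.1 (by positivity)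
    (div_le_div_of_nonneg_right (by gcongr) hθ'.le) ?_ hzy hzx)
  rw [mul_div_cancel₀ _ hθ'.ne']
  linarith

end DriftControl

section Packing

variable [MetricSpace X] {φ : ℝ → X → X}

theorem tsum_le_packPre {W C : Set X} {s ε : ℝ} {N : ℕ} {T : X → ℝ} (hC : C.Countable)
    (hCW : C ⊆ W) (hT : ∀ x ∈ C, (N : ℝ) ≤ T x)
    (hdisj : C.PairwiseDisjoint fun x => repBallCl φ x (T x) ε) :
    ∑' x : C, ENNReal.ofReal (Real.exp (-(s * T x))) ≤ packPre φ W s ε N := by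
  rcases C.eq_empty_or_nonempty with rfl | ⟨x₀, -⟩
  · simp
  have := hC.to_subtype
  obtain ⟨f, hf⟩ := Countable.exists_injective_nat C
  set xs : ℕ → X := extend f Subtype.val fun _ => x₀
  have hxs (c : C) : xs (f c) = c := hf.extend_apply _ _ c
  have hfam : IsPackingFamily φ W ε N (range f) xs (T ∘ xs) := by
    refine ⟨?_, ?_⟩
    · rintro _ ⟨c, rfl⟩
      simp only [comp_apply, hxs]
      exact ⟨hCW c.2, hT c c.2⟩
    · rintro _ ⟨c, rfl⟩ _ ⟨c', rfl⟩ hne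
      simp only [comp_apply, hxs]
      exact hdisj c.2 c'.2 (Subtype.coe_injective.ne (hf.ne_iff.1 hne))
  calc ∑' x : C, ENNReal.ofReal (Real.exp (-(s * T x)))
      = ∑' i : range f, ENNReal.ofReal (Real.exp (-(s * (T ∘ xs) i))) := by
        rw [tsum_range (fun i => ENNReal.ofReal (Real.exp (-(s * (T ∘ xs) i)))) hf]
        simp only [comp_apply, hxs]
    _ ≤ packPre φ W s ε N :=
        le_iSup_of_le xs <| le_iSup_of_le (T ∘ xs) <| le_iSup_of_le (range f) <|
          le_iSup_of_le hfam le_rfl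

theorem packPre_anti {Z : Set X} {s₁ s₂ : ℝ} (h : s₁ ≤ s₂) (ε : ℝ) (N : ℕ) :
    packPre φ Z s₂ ε N ≤ packPre φ Z s₁ ε N :=
  iSup_mono fun _ => iSup_mono fun t => iSup_mono fun _ => iSup_mono fun hfam =>
    ENNReal.tsum_le_tsum fun i => by
      have : (0 : ℝ) ≤ t i := (Nat.cast_nonneg N).trans (hfam.1 i i.2).2
      gcongr

theorem packM_anti {Z : Set X} {s₁ s₂ : ℝ} (h : s₁ ≤ s₂) (ε : ℝ) :
    packM φ Z s₂ ε ≤ packM φ Z s₁ ε :=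
  iInf₂_mono fun _ _ => ENNReal.tsum_le_tsum fun _ => iInf_mono fun N => packPre_anti h ε N

theorem ofReal_le_packEnt {Z : Set X} {s ε : ℝ} (h : packM φ Z s ε ≠ 0) :
    ENNReal.ofReal s ≤ packEnt φ Z ε := by
  refine le_sInf ?_
  rintro _ ⟨s', ⟨-, hs'⟩, rfl⟩
  refine ENNReal.ofReal_le_ofReal (le_of_not_gt fun hlt => h ?_)
  exact le_antisymm (hs' ▸ packM_anti hlt.le ε) bot_le

/-- Mass distribution principle for `packM`. -/
theorem le_packM_of_le_packPre [MeasurableSpace X] {μ : Measure X} {c : ℝ≥0∞} {P Z : Set X}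
    {s ε : ℝ} (hPZ : P ⊆ Z) (h : ∀ W N, c * μ (P ∩ W) ≤ packPre φ W s ε N) :
    c * μ P ≤ packM φ Z s ε := by
  refine le_iInf₂ fun Zs hZs => ?_
  have hP : P ⊆ ⋃ i, P ∩ Zs i := by
    rw [← inter_iUnion]
    exact subset_inter subset_rfl (hPZ.trans hZs)
  calc c * μ P ≤ c * ∑' i, μ (P ∩ Zs i) := by
        gcongr
        exact (measure_mono hP).trans (measure_iUnion_le _)
    _ = ∑' i, c * μ (P ∩ Zs i) := ENNReal.tsum_mul_left.symm
    _ ≤ ∑' i, packP φ (Zs i) s ε := ENNReal.tsum_le_tsum fun i => le_iInf fun N => h (Zs i) N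

/-- Choose for each `x ∈ F` a time `t x` at which the `ε'`-ball is `μ`-small, cover `F` by
Vitali's selection, and compare the sizes `⌈t x⌉` of the covering balls with the times
`(⌈t x⌉ + 2τ) / (1 - θ)` of the disjoint ones. -/
theorem DriftControl.mul_measure_le_packPre [CompactSpace X] [MeasurableSpace X] {τ θ ε ε' s : ℝ}
    (hD : DriftControl φ τ (τ / θ) ε) (hφ : IsFlow φ) (hτ : 0 < τ) (hθ : θ ∈ Ioo 0 1)
    (hε : 0 < ε) (hεε' : 2 * ε < ε') (hs : 0 ≤ s) (μ : Measure X) {F W : Set X} (hFW : F ⊆ W)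
    (hF : ∀ x ∈ F, ∃ᶠ t in atTop, μ (repBall φ x t ε') < ENNReal.ofReal (Real.exp (-(s * t))))
    (N : ℕ) :
    ENNReal.ofReal (Real.exp (-(s * (2 * τ + 1)))) * μ F ≤ packPre φ W ((1 - θ) * s) ε N := by
  have hθ' : 0 < 1 - θ := sub_pos.2 hθ.2
  choose! t htN htμ using fun x hx => (hF x hx).forall_exists_of_atTop ((N : ℝ) + 1)
  set k : X → ℕ := fun x => ⌈t x⌉₊
  obtain ⟨C, hCF, hCc, hCdisj, hFC⟩ := hD.exists_countable_disjoint_cover hφ hτ hθ hε F k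
  have hball (x : X) (hx : x ∈ C) : μ (repBallCl φ x (k x) (2 * ε)) ≤
      ENNReal.ofReal (Real.exp s) * ENNReal.ofReal (Real.exp (-(s * k x))) := by
    have ht0 : 0 ≤ t x := by linarith [htN x (hCF hx), (Nat.cast_nonneg N : (0 : ℝ) ≤ N)]
    have hk := Nat.ceil_lt_add_one ht0
    calc μ (repBallCl φ x (k x) (2 * ε)) ≤ μ (repBall φ x (t x) ε') :=
          measure_mono (repBallCl_subset_repBall (Nat.le_ceil _) hεε')
      _ ≤ ENNReal.ofReal (Real.exp (-(s * t x))) := (htμ x (hCF hx)).le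
      _ ≤ _ := by
          rw [← ENNReal.ofReal_mul (Real.exp_nonneg _), ← Real.exp_add]
          gcongr
          nlinarith
  set S := ∑' x : C, ENNReal.ofReal (Real.exp (-(s * k x)))
  have hcover : μ F ≤ ENNReal.ofReal (Real.exp s) * S :=
    calc μ F ≤ ∑' x : C, μ (repBallCl φ x (k x) (2 * ε)) :=
          (measure_mono hFC).trans (measure_biUnion_le μ hCc _)
      _ ≤ ∑' x : C, ENNReal.ofReal (Real.exp s) * ENNReal.ofReal (Real.exp (-(s * k x))) :=
          ENNReal.tsum_le_tsum fun x => hball x x.2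
      _ = ENNReal.ofReal (Real.exp s) * S := ENNReal.tsum_mul_left
  have hpack := tsum_le_packPre (φ := φ) (s := (1 - θ) * s) (N := N) hCc (hCF.trans hFW)
    (fun x hx => by
      have : (k x : ℝ) ≤ (k x + 2 * τ) / (1 - θ) := by
        rw [le_div_iff₀ hθ']
        nlinarith [mul_nonneg (Nat.cast_nonneg (k x) : (0 : ℝ) ≤ k x) hθ.1.le]
      linarith [htN x (hCF hx), Nat.le_ceil (t x)]) hCdisj
  have hexp (x : X) : ENNReal.ofReal (Real.exp (-((1 - θ) * s * ((k x + 2 * τ) / (1 - θ))))) =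
      ENNReal.ofReal (Real.exp (-(s * (2 * τ)))) * ENNReal.ofReal (Real.exp (-(s * k x))) := by
    rw [← ENNReal.ofReal_mul (Real.exp_nonneg _), ← Real.exp_add]
    congr 2
    field_simp
    ring
  calc ENNReal.ofReal (Real.exp (-(s * (2 * τ + 1)))) * μ F
      = ENNReal.ofReal (Real.exp (-(s * (2 * τ)))) * (ENNReal.ofReal (Real.exp (-s)) * μ F) := by
        rw [← mul_assoc, ← ENNReal.ofReal_mul (Real.exp_nonneg _), ← Real.exp_add]
        congr 3
        ring
    _ ≤ ENNReal.ofReal (Real.exp (-(s * (2 * τ)))) *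
          (ENNReal.ofReal (Real.exp (-s)) * (ENNReal.ofReal (Real.exp s) * S)) := by gcongr
    _ = ENNReal.ofReal (Real.exp (-(s * (2 * τ)))) * S := by
        rw [← mul_assoc (ENNReal.ofReal (Real.exp (-s))), ← ENNReal.ofReal_mul (Real.exp_nonneg _),
          ← Real.exp_add, neg_add_cancel, Real.exp_zero, ENNReal.ofReal_one, one_mul]
    _ = ∑' x : C, ENNReal.ofReal (Real.exp (-((1 - θ) * s * ((k x + 2 * τ) / (1 - θ))))) := by
        simp only [hexp, S, ENNReal.tsum_mul_left]
    _ ≤ packPre φ W ((1 - θ) * s) ε N := hpack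

end Packing

section LocalEntropy

variable [MetricSpace X] [MeasurableSpace X] {φ : ℝ → X → X}

theorem upLocalEntAt_antitone (μ : Measure X) (x : X) : Antitone (upLocalEntAt φ μ x) := by
  intro ε₁ ε₂ h
  refine EReal.toENNReal_le_toENNReal (limsup_le_limsup ?_)
  filter_upwards [eventually_ge_atTop 0] with t ht
  have hμ : μ (repBall φ x t ε₁) ≤ μ (repBall φ x t ε₂) :=
    measure_mono fun y ⟨α, hα, htr⟩ => ⟨α, hα, fun s hs => (htr s hs).trans_le h⟩
  exact mul_le_mul_of_nonneg_left (EReal.neg_le_neg_iff.2 (ENNReal.log_monotone hμ))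
    (EReal.coe_nonneg.2 (inv_nonneg.2 ht))

theorem setOf_lt_upLocalEnt_subset (μ : Measure X) (c : ℝ≥0∞) :
    {x | c < upLocalEnt φ μ x} ⊆ ⋃ n : ℕ, {x | c < upLocalEntAt φ μ x (1 / (n + 1))} := by
  intro x hx
  obtain ⟨ε, hε⟩ := lt_iSup_iff.1 (show c < upLocalEnt φ μ x from hx)
  obtain ⟨hε, hcε⟩ := lt_iSup_iff.1 hε
  obtain ⟨n, hn⟩ := exists_nat_one_div_lt hε
  exact mem_iUnion.2 ⟨n, hcε.trans_le (upLocalEntAt_antitone μ x hn.le)⟩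

theorem frequently_measure_repBall_lt {μ : Measure X} {x : X} {s ε : ℝ}
    (h : ENNReal.ofReal s < upLocalEntAt φ μ x ε) :
    ∃ᶠ t in atTop, μ (repBall φ x t ε) < ENNReal.ofReal (Real.exp (-(s * t))) := by
  have hs : (s : EReal) < limsup
      (fun t : ℝ => ((t⁻¹ : ℝ) : EReal) * -ENNReal.log (μ (repBall φ x t ε))) atTop := by
    by_contra! hle
    exact h.not_ge (EReal.toENNReal_le_toENNReal hle)
  refine ((frequently_lt_of_lt_limsup (by isBoundedDefault) hs).and_eventually
    (eventually_gt_atTop 0)).mono fun t ⟨hst, ht⟩ => ?_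
  by_contra! hμ
  have hlog : -ENNReal.log (μ (repBall φ x t ε)) ≤ ((s * t : ℝ) : EReal) := by
    have := ENNReal.log_monotone hμ
    rw [ENNReal.log_ofReal_of_pos (Real.exp_pos _), Real.log_exp] at this
    simpa using EReal.neg_le_neg_iff.2 this
  refine hst.not_ge ((mul_le_mul_of_nonneg_left hlog
    (EReal.coe_nonneg.2 (inv_nonneg.2 ht.le))).trans_eq ?_)
  rw [← EReal.coe_mul, mul_comm s, inv_mul_cancel_left₀ ht.ne']

end LocalEntropy

/-- Apply `DriftControl.mul_measure_le_packPre` with `U = τ / θ` and let `θ → 0`. -/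
theorem ofReal_le_packEntTop [MetricSpace X] [CompactSpace X] [MeasurableSpace X]
    {φ : ℝ → X → X} (hφ : IsFlow φ) (hfpf : FixedPointFree φ) {μ : Measure X} {Z : Set X}
    {s ε' : ℝ} (hs : 0 ≤ s) (hε' : 0 < ε')
    (hμ : μ ({x | ENNReal.ofReal s < upLocalEntAt φ μ x ε'} ∩ Z) ≠ 0) :
    ENNReal.ofReal s ≤ packEntTop φ Z := by
  set P := {x | ENNReal.ofReal s < upLocalEntAt φ μ x ε'} ∩ Z
  obtain ⟨τ, hτ, hD⟩ := hφ.exists_driftControl hfpf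
  have hθ : ∀ θ ∈ Ioo (0 : ℝ) 1, ENNReal.ofReal ((1 - θ) * s) ≤ packEntTop φ Z := by
    intro θ hθ
    obtain ⟨ε, hε, hεε', hDε⟩ := hD (τ / θ) (ε' / 3) (by positivity)
    have hM : ENNReal.ofReal (Real.exp (-(s * (2 * τ + 1)))) * μ P ≤
        packM φ Z ((1 - θ) * s) ε :=
      le_packM_of_le_packPre inter_subset_right fun W N =>
        hDε.mul_measure_le_packPre hφ hτ hθ hε (by linarith) hs μ inter_subset_right
          (fun x hx => frequently_measure_repBall_lt hx.1.1) N
    have hne : packM φ Z ((1 - θ) * s) ε ≠ 0 :=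
      (ENNReal.mul_pos (ENNReal.ofReal_pos.2 (Real.exp_pos _)).ne' hμ).trans_le hM |>.ne'
    exact (ofReal_le_packEnt hne).trans (le_iSup₂_of_le ε hε le_rfl)
  have hlim : Tendsto (fun θ : ℝ => ENNReal.ofReal ((1 - θ) * s)) (𝓝[>] 0)
      (𝓝 (ENNReal.ofReal s)) := by
    have : Continuous fun θ : ℝ => ENNReal.ofReal ((1 - θ) * s) :=
      ENNReal.continuous_ofReal.comp (by fun_prop)
    simpa using (this.tendsto 0).mono_left nhdsWithin_le_nhds
  exact le_of_tendsto hlim (mem_of_superset (Ioo_mem_nhdsGT one_pos) hθ)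

theorem packing_entropy_lower_bound_general [MetricSpace X] [CompactSpace X]
    [MeasurableSpace X]
    (φ : ℝ → X → X) (hφ : IsFlow φ) (hfpf : FixedPointFree φ)
    (Z : Set X) (hZ : MeasurableSet Z) :
    (⨆ (μ : Measure X) (_ : IsProbabilityMeasure μ) (_ : μ Z = 1), upEnt φ μ) ≤
      packEntTop φ Z := by
  refine iSup₂_le fun μ _ => iSup_le fun hμZ => le_of_forall_lt_imp_le_of_dense fun c hc => ?_
  lift c to ℝ≥0 using hc.ne_top
  have hpos : μ {x | (c : ℝ≥0∞) < upLocalEnt φ μ x} ≠ 0 := by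
    intro h0
    have hae : ∀ᵐ x ∂μ, upLocalEnt φ μ x ≤ c := by
      simpa only [ae_iff, not_le] using h0
    refine hc.not_ge ((lintegral_mono_ae hae).trans ?_)
    simp
  obtain ⟨n, hn⟩ : ∃ n : ℕ, μ ({x | (c : ℝ≥0∞) < upLocalEntAt φ μ x (1 / (n + 1))} ∩ Z) ≠ 0 := by
    by_contra! h
    refine hpos (measure_mono_null (setOf_lt_upLocalEnt_subset μ c)
      (measure_iUnion_null fun n => ?_))
    rw [← measure_inter_conull ((prob_compl_eq_zero_iff hZ).2 hμZ)]
    exact h n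
  simpa using ofReal_le_packEntTop hφ hfpf c.coe_nonneg Nat.one_div_pos_of_nat (by simpa using hn)

/-- lower bound in the variational principle for packing entropy. -/
theorem packing_entropy_lower_bound [MetricSpace X] [CompactSpace X]
    [MeasurableSpace X] [BorelSpace X]
    (φ : ℝ → X → X) (hφ : IsFlow φ) (hfpf : FixedPointFree φ)
    (Z : Set X) (hZ : MeasurableSet Z) :
    (⨆ (μ : Measure X) (_ : IsProbabilityMeasure μ) (_ : μ Z = 1), upEnt φ μ) ≤
      packEntTop φ Z :=
  packing_entropy_lower_bound_general φ hφ hfpf Z hZ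
end

section
/- In the inductive construction for the upper bound, the limit measure satisfies: for every i and every x ∈ K_i, e^{−m_i(x)s} ≤ μ̃(B̄(x,γ_i)) ≤ C e^{−m_i(x)s}, where C = Π_{n=1}^∞ (1 + 2^{−n}) < ∞; in particular 1 < μ̃(K̃) ≤ 2C. -/
open Set Filter Topology MeasureTheory ENNReal NNReal

variable {X : Type*}

/-!
Each ball `B̄(x, γ_i)`, `x ∈ K_i`, contains exactly the points of the later levels `K_n` that
descend from `x` through the nesting, and every point of `K_n` descends from exactly one point of
`K_i`. So the mass that `μ_n` puts on `B̄(x, γ_i)` is obtained from `e^{-m_i(x)s}` by `n - i`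
redistribution steps, each of which loses nothing and gains at most a factor `1 + 2^{-k-1}`.
The ball `B̄(x, γ_i)` is closed, and it has an open neighbourhood (the complement of the other
balls of level `i`) that carries the same `μ_n`-mass; testing the weak-* convergence against
Urysohn functions transfers both bounds to `μ̃`. The bounds on `μ̃(K̃)` follow in the same way
from the total masses, which stay between `∑_{K_1} e^{-m_1 s}` and `C` times it.
-/

open Metric

section WeakLimit

variable [TopologicalSpace X] [MeasurableSpace X]

def IsWeakLimitPoint (μs : ℕ → Measure X) (μ : Measure X) : Prop :=
  ∃ f : ℕ → ℕ, StrictMono f ∧ ∀ g : C(X, ℝ),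
    Tendsto (fun n => ∫ x, g x ∂(μs (f n))) atTop (𝓝 (∫ x, g x ∂μ))

variable [OpensMeasurableSpace X] (μ : Measure X) [IsFiniteMeasure μ] {g : C(X, ℝ)}

lemma integrable_of_forall_mem_Icc (hg : ∀ x, g x ∈ Icc 0 1) : Integrable g μ :=
  Integrable.of_bound g.continuous.aestronglyMeasurable 1
    (ae_of_all _ fun x => by rw [Real.norm_of_nonneg (hg x).1]; exact (hg x).2)

lemma measureReal_le_integral_of_eqOn_one (hg : ∀ x, g x ∈ Icc 0 1) {F : Set X}
    (hF : MeasurableSet F) (hgF : EqOn g 1 F) : μ.real F ≤ ∫ x, g x ∂μ := by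
  rw [← integral_indicator_one hF]
  refine integral_mono ((integrable_const 1).indicator hF) (integrable_of_forall_mem_Icc μ hg)
    fun x => ?_
  by_cases hx : x ∈ F
  · simp [hx, hgF hx]
  · simp [hx, (hg x).1]

lemma integral_le_measureReal_of_eqOn_zero (hg : ∀ x, g x ∈ Icc 0 1) {U : Set X}
    (hU : MeasurableSet U) (hgU : EqOn g 0 Uᶜ) : ∫ x, g x ∂μ ≤ μ.real U := by
  rw [← integral_indicator_one hU]
  refine integral_mono (integrable_of_forall_mem_Icc μ hg) ((integrable_const 1).indicator hU)
    fun x => ?_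
  by_cases hx : x ∈ U
  · simp [hx, (hg x).2]
  · simp [hx, hgU hx]

namespace IsWeakLimitPoint

variable [NormalSpace X] {μs : ℕ → Measure X} [∀ n, IsFiniteMeasure (μs n)] {μ}
  {F U : Set X} {c : ℝ≥0∞}

lemma measure_le (h : IsWeakLimitPoint μs μ) (hF : IsClosed F) (hU : IsOpen U) (hFU : F ⊆ U)
    (hc : ∀ᶠ n in atTop, μs n U ≤ c) : μ F ≤ c := by
  obtain ⟨f, hf, hlim⟩ := h
  obtain ⟨g, hgU, hgF, hg⟩ := exists_continuous_zero_one_of_isClosed hU.isClosed_compl hF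
    (disjoint_compl_left_iff_subset.mpr hFU)
  rcases eq_or_ne c ⊤ with rfl | hc_top
  · exact le_top
  have hint : ∀ᶠ n in atTop, ∫ x, g x ∂(μs (f n)) ≤ c.toReal :=
    (hf.tendsto_atTop.eventually hc).mono fun n hn =>
      (integral_le_measureReal_of_eqOn_zero _ hg hU.measurableSet hgU).trans
        (ENNReal.toReal_mono hc_top hn)
  rw [← ENNReal.toReal_le_toReal (measure_ne_top μ F) hc_top]
  exact (measureReal_le_integral_of_eqOn_one μ hg hF.measurableSet hgF).trans
    (le_of_tendsto (hlim g) hint)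

lemma le_measure_of_subset (h : IsWeakLimitPoint μs μ) (hF : IsClosed F) (hU : IsOpen U)
    (hFU : F ⊆ U) (hc : ∀ᶠ n in atTop, c ≤ μs n F) : c ≤ μ U := by
  obtain ⟨f, hf, hlim⟩ := h
  obtain ⟨g, hgU, hgF, hg⟩ := exists_continuous_zero_one_of_isClosed hU.isClosed_compl hF
    (disjoint_compl_left_iff_subset.mpr hFU)
  have hc_top : c ≠ ⊤ := by
    obtain ⟨n, hn⟩ := hc.exists
    exact ne_top_of_le_ne_top (measure_ne_top _ F) hn
  have hint : ∀ᶠ n in atTop, c.toReal ≤ ∫ x, g x ∂(μs (f n)) :=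
    (hf.tendsto_atTop.eventually hc).mono fun n hn =>
      (ENNReal.toReal_mono (measure_ne_top _ F) hn).trans
        (measureReal_le_integral_of_eqOn_one _ hg hF.measurableSet hgF)
  rw [← ENNReal.toReal_le_toReal hc_top (measure_ne_top μ U)]
  exact (ge_of_tendsto (hlim g) hint).trans
    (integral_le_measureReal_of_eqOn_zero μ hg hU.measurableSet hgU)

lemma le_measure [μ.OuterRegular] (h : IsWeakLimitPoint μs μ) (hF : IsClosed F)
    (hc : ∀ᶠ n in atTop, c ≤ μs n F) : c ≤ μ F := by
  rw [Set.measure_eq_iInf_isOpen]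
  exact le_iInf₂ fun U hFU => le_iInf fun hU => h.le_measure_of_subset hF hU hFU hc

lemma le_measure_iInter_closure [μ.OuterRegular] (h : IsWeakLimitPoint μs μ) {S : ℕ → Set X}
    (hS : ∀ n, ∀ᵐ x ∂(μs n), x ∈ S n) (hc : ∀ᶠ n in atTop, c ≤ μs n univ) :
    c ≤ μ (⋂ N, closure (⋃ i ∈ Ici N, S i)) := by
  have hanti : Antitone fun N => closure (⋃ i ∈ Ici N, S i) := fun a b hab =>
    closure_mono (biUnion_subset_biUnion_left (Ici_subset_Ici.mpr hab))
  rw [hanti.measure_iInter (fun N => isClosed_closure.measurableSet.nullMeasurableSet)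
    ⟨0, measure_ne_top μ _⟩]
  refine le_iInf fun N => h.le_measure isClosed_closure
    ((hc.and (eventually_ge_atTop N)).mono fun n ⟨hcn, hn⟩ => hcn.trans ?_)
  exact measure_mono_ae ((hS n).mono fun x hx _ => subset_closure (mem_biUnion hn hx))

end IsWeakLimitPoint

end WeakLimit

lemma finset_sum_smul_dirac_apply [MeasurableSpace X] [MeasurableSingletonClass X]
    (S : Finset X) (c : X → ℝ≥0∞) (A : Set X) [DecidablePred (· ∈ A)] :
    (∑ x ∈ S, c x • Measure.dirac x) A = ∑ x ∈ S.filter (· ∈ A), c x := by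
  simp [Finset.sum_filter, Measure.dirac_apply, indicator_apply]

lemma prod_range_le_tprod_of_one_le {f : ℕ → ℝ} (hf : Multipliable f) (h1 : ∀ n, 1 ≤ f n)
    (N : ℕ) : ∏ n ∈ Finset.range N, f n ≤ ∏' n, f n := by
  refine Monotone.ge_of_tendsto (monotone_nat_of_le_succ fun n => ?_) hf.hasProd.tendsto_prod_nat N
  rw [Finset.prod_range_succ]
  exact le_mul_of_one_le_right (Finset.prod_nonneg fun k _ => zero_le_one.trans (h1 k)) (h1 n)

structure IsNestedBallSystem [MetricSpace X] (K : ℕ → Finset X) (γ : ℕ → ℝ) : Prop where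
  pos : ∀ i, 0 < γ i
  disjoint : ∀ i, ∀ x ∈ K i, ∀ y ∈ K i, x ≠ y →
    Disjoint (closedBall x (γ i)) (closedBall y (γ i))
  nested : ∀ i, ∀ y ∈ K (i + 1), ∃ x ∈ K i, closedBall y (γ (i + 1)) ⊆ closedBall x (γ i / 2)

namespace IsNestedBallSystem

open scoped Classical

variable [MetricSpace X] {K : ℕ → Finset X} {γ : ℕ → ℝ} {i n : ℕ} {x : X}

lemma eq_of_mem_closedBall (h : IsNestedBallSystem K γ) {x' z : X} (hx : x ∈ K i)
    (hx' : x' ∈ K i) (hz : z ∈ closedBall x (γ i)) (hz' : z ∈ closedBall x' (γ i)) : x = x' := by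
  by_contra hne
  exact disjoint_left.mp (h.disjoint i x hx x' hx' hne) hz hz'

lemma exists_closedBall_subset (h : IsNestedBallSystem K γ) (hin : i ≤ n) :
    ∀ z ∈ K n, ∃ x ∈ K i, closedBall z (γ n) ⊆ closedBall x (γ i) := by
  induction n, hin using Nat.le_induction with
  | base => exact fun z hz => ⟨z, hz, subset_rfl⟩
  | succ n _ ih =>
    intro z hz
    obtain ⟨y, hy, hzy⟩ := h.nested n z hz
    obtain ⟨x, hx, hyx⟩ := ih y hy
    exact ⟨x, hx, hzy.trans ((closedBall_subset_closedBall (half_le_self (h.pos n).le)).trans hyx)⟩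

lemma closedBall_subset_of_mem (h : IsNestedBallSystem K γ) (hin : i ≤ n) (hx : x ∈ K i)
    {y : X} (hy : y ∈ K n) (hyx : y ∈ closedBall x (γ i)) :
    closedBall y (γ n) ⊆ closedBall x (γ i) := by
  obtain ⟨x', hx', hsub⟩ := h.exists_closedBall_subset hin y hy
  obtain rfl := h.eq_of_mem_closedBall hx hx' hyx (hsub (mem_closedBall_self (h.pos n).le))
  exact hsub

lemma filter_closedBall_self (h : IsNestedBallSystem K γ) (hx : x ∈ K i) :
    (K i).filter (· ∈ closedBall x (γ i)) = {x} := by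
  ext y
  simp only [Finset.mem_filter, Finset.mem_singleton]
  constructor
  · rintro ⟨hy, hyx⟩
    exact h.eq_of_mem_closedBall hy hx (mem_closedBall_self (h.pos i).le) hyx
  · rintro rfl
    exact ⟨hx, mem_closedBall_self (h.pos i).le⟩

lemma filter_closedBall_succ (h : IsNestedBallSystem K γ) (hin : i ≤ n) (hx : x ∈ K i) :
    (K (n + 1)).filter (· ∈ closedBall x (γ i)) =
      ((K n).filter (· ∈ closedBall x (γ i))).biUnion
        fun y => (K (n + 1)).filter (· ∈ ball y (γ n)) := by
  ext z
  simp only [Finset.mem_filter, Finset.mem_biUnion]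
  constructor
  · rintro ⟨hz, hzx⟩
    obtain ⟨y, hy, hzy⟩ := h.nested n z hz
    have hzy : z ∈ closedBall y (γ n / 2) := hzy (mem_closedBall_self (h.pos _).le)
    obtain ⟨x', hx', hyx'⟩ := h.exists_closedBall_subset hin y hy
    obtain rfl := h.eq_of_mem_closedBall hx hx' hzx
      (hyx' (closedBall_subset_closedBall (half_le_self (h.pos n).le) hzy))
    exact ⟨y, ⟨hy, hyx' (mem_closedBall_self (h.pos n).le)⟩, hz,
      closedBall_subset_ball (half_lt_self (h.pos n)) hzy⟩
  · rintro ⟨y, ⟨hy, hyx⟩, hz, hzy⟩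
    exact ⟨hz, h.closedBall_subset_of_mem hin hx hy hyx (ball_subset_closedBall hzy)⟩

lemma pairwiseDisjoint_filter_ball (h : IsNestedBallSystem K γ) (n : ℕ) :
    (K n : Set X).PairwiseDisjoint fun y => (K (n + 1)).filter (· ∈ ball y (γ n)) :=
  fun _ hy _ hy' hne => Finset.disjoint_left.mpr fun _ hz hz' => hne <|
    h.eq_of_mem_closedBall hy hy' (ball_subset_closedBall (Finset.mem_filter.mp hz).2)
      (ball_subset_closedBall (Finset.mem_filter.mp hz').2)

lemma sum_filter_closedBall_succ {M : Type*} [AddCommMonoid M] (h : IsNestedBallSystem K γ)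
    (hin : i ≤ n) (hx : x ∈ K i) (w : X → M) :
    ∑ z ∈ (K (n + 1)).filter (· ∈ closedBall x (γ i)), w z =
      ∑ y ∈ (K n).filter (· ∈ closedBall x (γ i)),
        ∑ z ∈ (K (n + 1)).filter (· ∈ ball y (γ n)), w z := by
  rw [h.filter_closedBall_succ hin hx, Finset.sum_biUnion
    ((h.pairwiseDisjoint_filter_ball n).subset (Finset.coe_subset.mpr (Finset.filter_subset _ _)))]

lemma sum_eq_sum_sum_filter_closedBall {M : Type*} [AddCommMonoid M]
    (h : IsNestedBallSystem K γ) (hin : i ≤ n) (w : X → M) :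
    ∑ y ∈ K n, w y = ∑ x ∈ K i, ∑ y ∈ (K n).filter (· ∈ closedBall x (γ i)), w y := by
  have hcover : K n = (K i).biUnion fun x => (K n).filter (· ∈ closedBall x (γ i)) := by
    ext y
    simp only [Finset.mem_biUnion, Finset.mem_filter]
    refine ⟨fun hy => ?_, fun ⟨_, _, hy, _⟩ => hy⟩
    obtain ⟨x, hx, hyx⟩ := h.exists_closedBall_subset hin y hy
    exact ⟨x, hx, hy, hyx (mem_closedBall_self (h.pos n).le)⟩
  have hdisj : (K i : Set X).PairwiseDisjoint fun x => (K n).filter (· ∈ closedBall x (γ i)) :=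
    fun x hx x' hx' hne => Finset.disjoint_left.mpr fun _ hy hy' =>
      hne (h.eq_of_mem_closedBall hx hx' (Finset.mem_filter.mp hy).2 (Finset.mem_filter.mp hy').2)
  conv_lhs => rw [hcover]
  exact Finset.sum_biUnion hdisj

lemma exists_isOpen_closedBall_subset (h : IsNestedBallSystem K γ) (hx : x ∈ K i) :
    ∃ U, IsOpen U ∧ closedBall x (γ i) ⊆ U ∧
      ∀ n, i ≤ n → ∀ y ∈ K n, y ∈ U → y ∈ closedBall x (γ i) := by
  refine ⟨(⋃ x' ∈ (K i).erase x, closedBall x' (γ i))ᶜ,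
    ((K i).erase x).finite_toSet.isClosed_biUnion (fun _ _ => isClosed_closedBall) |>.isOpen_compl,
    fun z hz hz' => ?_, fun n hin y hy hyU => ?_⟩
  · obtain ⟨x', hx', hzx'⟩ := mem_iUnion₂.mp hz'
    exact Finset.ne_of_mem_erase hx'
      (h.eq_of_mem_closedBall (Finset.mem_of_mem_erase hx') hx hzx' hz)
  · obtain ⟨x', hx', hyx'⟩ := h.exists_closedBall_subset hin y hy
    have hyx' : y ∈ closedBall x' (γ i) := hyx' (mem_closedBall_self (h.pos n).le)
    obtain rfl : x' = x := by
      by_contra hne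
      exact hyU (mem_iUnion₂.mpr ⟨x', Finset.mem_erase.mpr ⟨hne, hx'⟩, hyx'⟩)
    exact hyx'

variable {w : ℕ → X → ℝ≥0∞}

lemma le_sum_filter_closedBall (h : IsNestedBallSystem K γ)
    (hw : ∀ n, ∀ y ∈ K n, w n y ≤ ∑ z ∈ (K (n + 1)).filter (· ∈ ball y (γ n)), w (n + 1) z)
    (hx : x ∈ K i) (hin : i ≤ n) :
    w i x ≤ ∑ y ∈ (K n).filter (· ∈ closedBall x (γ i)), w n y := by
  induction n, hin using Nat.le_induction with
  | base => rw [h.filter_closedBall_self hx, Finset.sum_singleton]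
  | succ n hin ih =>
    rw [h.sum_filter_closedBall_succ hin hx]
    exact ih.trans (Finset.sum_le_sum fun y hy => hw n y (Finset.mem_filter.mp hy).1)

lemma sum_filter_closedBall_le (h : IsNestedBallSystem K γ) {a : ℕ → ℝ≥0∞}
    (hw : ∀ n, ∀ y ∈ K n, ∑ z ∈ (K (n + 1)).filter (· ∈ ball y (γ n)), w (n + 1) z ≤ a n * w n y)
    (hx : x ∈ K i) (hin : i ≤ n) :
    ∑ y ∈ (K n).filter (· ∈ closedBall x (γ i)), w n y ≤ (∏ k ∈ Finset.Ico i n, a k) * w i x := by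
  induction n, hin using Nat.le_induction with
  | base => rw [Finset.Ico_self, Finset.prod_empty, one_mul, h.filter_closedBall_self hx,
      Finset.sum_singleton]
  | succ n hin ih =>
    rw [h.sum_filter_closedBall_succ hin hx, Finset.prod_Ico_succ_top hin]
    calc _ ≤ ∑ y ∈ (K n).filter (· ∈ closedBall x (γ i)), a n * w n y :=
          Finset.sum_le_sum fun y hy => hw n y (Finset.mem_filter.mp hy).1
      _ = a n * ∑ y ∈ (K n).filter (· ∈ closedBall x (γ i)), w n y := (Finset.mul_sum ..).symm
      _ ≤ a n * ((∏ k ∈ Finset.Ico i n, a k) * w i x) := by gcongr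
      _ = _ := by ring

lemma sum_weight_le_sum_weight (h : IsNestedBallSystem K γ)
    (hw : ∀ n, ∀ y ∈ K n, w n y ≤ ∑ z ∈ (K (n + 1)).filter (· ∈ ball y (γ n)), w (n + 1) z)
    (hin : i ≤ n) : ∑ x ∈ K i, w i x ≤ ∑ y ∈ K n, w n y := by
  rw [h.sum_eq_sum_sum_filter_closedBall hin]
  exact Finset.sum_le_sum fun x hx => h.le_sum_filter_closedBall hw hx hin

lemma sum_weight_le_prod_mul_sum_weight (h : IsNestedBallSystem K γ) {a : ℕ → ℝ≥0∞}
    (hw : ∀ n, ∀ y ∈ K n, ∑ z ∈ (K (n + 1)).filter (· ∈ ball y (γ n)), w (n + 1) z ≤ a n * w n y)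
    (hin : i ≤ n) : ∑ y ∈ K n, w n y ≤ (∏ k ∈ Finset.Ico i n, a k) * ∑ x ∈ K i, w i x := by
  rw [h.sum_eq_sum_sum_filter_closedBall hin, Finset.mul_sum]
  exact Finset.sum_le_sum fun x hx => h.sum_filter_closedBall_le hw hx hin

lemma exists_isOpen_sum_filter_le (h : IsNestedBallSystem K γ) {a : ℕ → ℝ≥0∞}
    (hw : ∀ n, ∀ y ∈ K n, ∑ z ∈ (K (n + 1)).filter (· ∈ ball y (γ n)), w (n + 1) z ≤ a n * w n y)
    (hx : x ∈ K i) :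
    ∃ U, IsOpen U ∧ closedBall x (γ i) ⊆ U ∧ ∀ n, i ≤ n →
      ∑ y ∈ (K n).filter (· ∈ U), w n y ≤ (∏ k ∈ Finset.Ico i n, a k) * w i x := by
  obtain ⟨U, hU, hxU, hUK⟩ := h.exists_isOpen_closedBall_subset hx
  refine ⟨U, hU, hxU, fun n hin => le_trans (Finset.sum_le_sum_of_subset fun y hy => ?_)
    (h.sum_filter_closedBall_le hw hx hin)⟩
  obtain ⟨hyK, hyU⟩ := Finset.mem_filter.mp hy
  exact Finset.mem_filter.mpr ⟨hyK, hUK n hin y hyK hyU⟩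

end IsNestedBallSystem

lemma prod_Ico_ofReal_one_add_two_inv_pow_le_tprod (i n : ℕ) :
    ∏ k ∈ Finset.Ico i n, ENNReal.ofReal (1 + (2 : ℝ)⁻¹ ^ (k + 1)) ≤
      ENNReal.ofReal (∏' k : ℕ, (1 + (2 : ℝ)⁻¹ ^ (k + 1))) := by
  have h1 : ∀ k : ℕ, (1 : ℝ) ≤ 1 + 2⁻¹ ^ (k + 1) := fun k => le_add_of_nonneg_right (by positivity)
  have hsum : Summable fun k : ℕ => (2 : ℝ)⁻¹ ^ (k + 1) :=
    (_root_.summable_nat_add_iff 1).mpr (summable_geometric_of_lt_one (by norm_num) (by norm_num))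
  calc _ ≤ ∏ k ∈ Finset.range n, ENNReal.ofReal (1 + (2 : ℝ)⁻¹ ^ (k + 1)) := by
        rw [Finset.range_eq_Ico]
        exact Finset.prod_le_prod_of_subset_of_one_le' (Finset.Ico_subset_Ico_left (Nat.zero_le i))
          fun k _ _ => ENNReal.one_le_ofReal.mpr (h1 k)
    _ = ENNReal.ofReal (∏ k ∈ Finset.range n, (1 + (2 : ℝ)⁻¹ ^ (k + 1))) :=
        (ENNReal.ofReal_prod_of_nonneg fun k _ => zero_le_one.trans (h1 k)).symm
    _ ≤ _ := ENNReal.ofReal_le_ofReal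
        (prod_range_le_tprod_of_one_le (Real.multipliable_one_add_of_summable hsum) h1 n)

open scoped Classical in
theorem limit_measure_estimates_general [MetricSpace X]
    [MeasurableSpace X] [BorelSpace X]
    (s : ℝ)
    (K : ℕ → Finset X) (m : ℕ → X → ℝ) (γ : ℕ → ℝ) (μseq : ℕ → Measure X)
    (hμseq : ∀ i, μseq i =
      ∑ x ∈ K i, (ENNReal.ofReal (Real.exp (-(m i x * s)))) • Measure.dirac x)
    (hγpos : ∀ i, 0 < γ i)
    (hdisj : ∀ i, ∀ x ∈ K i, ∀ y ∈ K i, x ≠ y →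
      Disjoint (Metric.closedBall x (γ i)) (Metric.closedBall y (γ i)))
    (hnest : ∀ i, ∀ y ∈ K (i + 1), ∃ x ∈ K i,
      Metric.closedBall y (γ (i + 1)) ⊆ Metric.closedBall x (γ i / 2))
    (hmass₁ : ∀ i, ∀ x ∈ K i,
      ENNReal.ofReal (Real.exp (-(m i x * s))) ≤
        ∑ y ∈ (K (i + 1)).filter (fun y => y ∈ Metric.ball x (γ i)),
          ENNReal.ofReal (Real.exp (-(m (i + 1) y * s))))
    (hmass₂ : ∀ i, ∀ x ∈ K i,
      (∑ y ∈ (K (i + 1)).filter (fun y => y ∈ Metric.ball x (γ i)),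
          ENNReal.ofReal (Real.exp (-(m (i + 1) y * s)))) ≤
        ENNReal.ofReal (1 + (2 : ℝ)⁻¹ ^ (i + 1)) *
          ENNReal.ofReal (Real.exp (-(m i x * s))))
    (hsum₁ : 1 < ∑ x ∈ K 1, Real.exp (-(m 1 x * s)))
    (hsum₂ : ∑ x ∈ K 1, Real.exp (-(m 1 x * s)) < 2)
    (μt : Measure X) [IsFiniteMeasure μt]
    (hweak : ∃ f : ℕ → ℕ, StrictMono f ∧ ∀ g : C(X, ℝ),
      Filter.Tendsto (fun n => ∫ x, g x ∂(μseq (f n))) Filter.atTop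
        (𝓝 (∫ x, g x ∂μt))) :
    (∀ i, ∀ x ∈ K i,
      ENNReal.ofReal (Real.exp (-(m i x * s))) ≤ μt (Metric.closedBall x (γ i)) ∧
      μt (Metric.closedBall x (γ i)) ≤
        ENNReal.ofReal (∏' n : ℕ, (1 + (2 : ℝ)⁻¹ ^ (n + 1))) *
          ENNReal.ofReal (Real.exp (-(m i x * s)))) ∧
    1 < μt (⋂ n, closure (⋃ i ∈ Set.Ici n, (K i : Set X))) ∧
    μt (⋂ n, closure (⋃ i ∈ Set.Ici n, (K i : Set X))) ≤
      2 * ENNReal.ofReal (∏' n : ℕ, (1 + (2 : ℝ)⁻¹ ^ (n + 1))) := by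
  set C := ENNReal.ofReal (∏' n : ℕ, (1 + (2 : ℝ)⁻¹ ^ (n + 1)))
  set T := ∑ x ∈ K 1, ENNReal.ofReal (Real.exp (-(m 1 x * s)))
  have hT_eq : T = ENNReal.ofReal (∑ x ∈ K 1, Real.exp (-(m 1 x * s))) :=
    (ENNReal.ofReal_sum_of_nonneg fun _ _ => (Real.exp_pos _).le).symm
  have hK : IsNestedBallSystem K γ := ⟨hγpos, hdisj, hnest⟩
  have hweak : IsWeakLimitPoint μseq μt := hweak
  have hμ (n : ℕ) (A : Set X) : μseq n A =
      ∑ y ∈ (K n).filter (· ∈ A), ENNReal.ofReal (Real.exp (-(m n y * s))) := by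
    rw [hμseq, finset_sum_smul_dirac_apply]
  have : ∀ n, IsFiniteMeasure (μseq n) := fun n =>
    ⟨by rw [hμ]; exact ENNReal.sum_lt_top.mpr fun _ _ => ENNReal.ofReal_lt_top⟩
  have hC := prod_Ico_ofReal_one_add_two_inv_pow_le_tprod
  have hT : ∀ n ≥ 1, T ≤ μseq n univ ∧ μseq n univ ≤ C * T := fun n hn => by
    simp only [hμ, mem_univ, Finset.filter_true]
    exact ⟨hK.sum_weight_le_sum_weight hmass₁ hn,
      (hK.sum_weight_le_prod_mul_sum_weight hmass₂ hn).trans (by gcongr; exact hC 1 n)⟩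
  have hT₂ : T ≤ 2 := by
    rw [hT_eq, ← ENNReal.ofReal_ofNat 2]
    exact ENNReal.ofReal_le_ofReal hsum₂.le
  refine ⟨fun i x hx => ⟨?_, ?_⟩, ?_, ?_⟩
  · exact hweak.le_measure isClosed_closedBall (eventually_atTop.mpr ⟨i, fun n hn =>
      (hμ n _).symm ▸ hK.le_sum_filter_closedBall hmass₁ hx hn⟩)
  · obtain ⟨U, hU, hxU, hUK⟩ := hK.exists_isOpen_sum_filter_le hmass₂ hx
    exact hweak.measure_le isClosed_closedBall hU hxU (eventually_atTop.mpr ⟨i, fun n hn => by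
      rw [hμ]; exact (hUK n hn).trans (by gcongr; exact hC i n)⟩)
  · calc 1 < T := by rw [hT_eq]; exact ENNReal.one_lt_ofReal.mpr hsum₁
      _ ≤ _ := hweak.le_measure_iInter_closure (fun n => ae_iff.mpr (by rw [hμ]; simp))
          (eventually_atTop.mpr ⟨1, fun n hn => (hT n hn).1⟩)
  · calc _ ≤ μt univ := measure_mono (subset_univ _)
      _ ≤ C * T := hweak.measure_le isClosed_univ isOpen_univ subset_rfl
          (eventually_atTop.mpr ⟨1, fun n hn => (hT n hn).2⟩)
      _ ≤ 2 * C := by rw [mul_comm]; gcongr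

open scoped Classical in
/-- the weak-* limit measure of the inductive construction satisfies
`e^{-m_i(x)s} ≤ μ̃(B̄(x,γ_i)) ≤ C e^{-m_i(x)s}` and `1 < μ̃(K̃) ≤ 2C`. -/
theorem limit_measure_estimates [MetricSpace X] [CompactSpace X]
    [MeasurableSpace X] [BorelSpace X]
    (φ : ℝ → X → X) (hφ : IsFlow φ) (hfpf : FixedPointFree φ) (s : ℝ) (hs : 0 < s)
    (K : ℕ → Finset X) (m : ℕ → X → ℝ) (γ : ℕ → ℝ) (μseq : ℕ → Measure X)
    (hμseq : ∀ i, μseq i =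
      ∑ x ∈ K i, (ENNReal.ofReal (Real.exp (-(m i x * s)))) • Measure.dirac x)
    (hγpos : ∀ i, 0 < γ i) (hγ : ∀ i, γ (i + 1) < γ i / 4)
    (hdisj : ∀ i, ∀ x ∈ K i, ∀ y ∈ K i, x ≠ y →
      Disjoint (Metric.closedBall x (γ i)) (Metric.closedBall y (γ i)))
    (hnest : ∀ i, ∀ y ∈ K (i + 1), ∃ x ∈ K i,
      Metric.closedBall y (γ (i + 1)) ⊆ Metric.closedBall x (γ i / 2))
    (hmass₁ : ∀ i, ∀ x ∈ K i,
      ENNReal.ofReal (Real.exp (-(m i x * s))) ≤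
        ∑ y ∈ (K (i + 1)).filter (fun y => y ∈ Metric.ball x (γ i)),
          ENNReal.ofReal (Real.exp (-(m (i + 1) y * s))))
    (hmass₂ : ∀ i, ∀ x ∈ K i,
      (∑ y ∈ (K (i + 1)).filter (fun y => y ∈ Metric.ball x (γ i)),
          ENNReal.ofReal (Real.exp (-(m (i + 1) y * s)))) ≤
        ENNReal.ofReal (1 + (2 : ℝ)⁻¹ ^ (i + 1)) *
          ENNReal.ofReal (Real.exp (-(m i x * s))))
    (hsum₁ : 1 < ∑ x ∈ K 1, Real.exp (-(m 1 x * s)))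
    (hsum₂ : ∑ x ∈ K 1, Real.exp (-(m 1 x * s)) < 2)
    (μt : Measure X) [IsFiniteMeasure μt]
    (hweak : ∃ f : ℕ → ℕ, StrictMono f ∧ ∀ g : C(X, ℝ),
      Filter.Tendsto (fun n => ∫ x, g x ∂(μseq (f n))) Filter.atTop
        (𝓝 (∫ x, g x ∂μt))) :
    (∀ i, ∀ x ∈ K i,
      ENNReal.ofReal (Real.exp (-(m i x * s))) ≤ μt (Metric.closedBall x (γ i)) ∧
      μt (Metric.closedBall x (γ i)) ≤
        ENNReal.ofReal (∏' n : ℕ, (1 + (2 : ℝ)⁻¹ ^ (n + 1))) *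
          ENNReal.ofReal (Real.exp (-(m i x * s)))) ∧
    1 < μt (⋂ n, closure (⋃ i ∈ Set.Ici n, (K i : Set X))) ∧
    μt (⋂ n, closure (⋃ i ∈ Set.Ici n, (K i : Set X))) ≤
      2 * ENNReal.ofReal (∏' n : ℕ, (1 + (2 : ℝ)⁻¹ ^ (n + 1))) :=
  limit_measure_estimates_general s K m γ μseq hμseq hγpos hdisj hnest hmass₁ hmass₂ hsum₁ hsum₂ μt
    hweak
end
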